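/- arXiv:1706.04101 — 9 statements merged into one kernel-verified Lean document; each statement's English description precedes it below -/
import Mathlib

section
/- For every ε > 0 there exists Q₀ such that for all real Q ≥ Q₀ and every nonempty finite set A of positive integers contained in [1, Q], the product set AA satisfies |AA| ≥ |A|²·exp((−2·log 2 − ε)·(log Q)/(log log Q)). -/
open Finset Filter Real

/-!
Every `n ∈ AA` has at most `d(n)` representations `n = ab`, so
`|A|² ≤ ∑_{n ∈ AA} d(n) ≤ |AA| · max_{n ≤ Q²} d(n)`.

For the divisor bound `d(n) ≤ exp ((log 2 + o(1)) x / log x)` when `log n ≤ x`, split the prime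
factors of `n` at `K = ⌈x ^ c⌉` with `c < 1` close to `1`. A prime `p ≥ K` occurring to the power
`e` contributes `e + 1 ≤ 2 ^ e`, and these exponents add up to at most `log n / log K`. Each of the
fewer than `K` small primes contributes at most `log₂ n + 1`, so together they give only
`exp (O (x ^ c log x)) = exp (o (x / log x))`. The theorem takes `x = 2 log Q`.
-/

lemma sq_card_le_card_image_mul_mul_of_card_divisors_le {A : Finset ℕ} (hA : 0 ∉ A) {D : ℝ}
    (hD : ∀ n ∈ (A ×ˢ A).image (fun p => p.1 * p.2), (#n.divisors : ℝ) ≤ D) :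
    (#A : ℝ) ^ 2 ≤ #((A ×ˢ A).image (fun p => p.1 * p.2)) * D := by
  have hfiber : ∀ n, #{p ∈ A ×ˢ A | p.1 * p.2 = n} ≤ #n.divisors := by
    intro n
    rw [← card_map (s := n.divisors), Nat.map_div_right_divisors]
    refine card_le_card fun p hp => ?_
    simp only [mem_filter, mem_product] at hp
    obtain ⟨⟨ha, hb⟩, rfl⟩ := hp
    exact Nat.mem_divisorsAntidiagonal.mpr
      ⟨rfl, mul_ne_zero (ne_of_mem_of_not_mem ha hA) (ne_of_mem_of_not_mem hb hA)⟩
  calc (#A : ℝ) ^ 2 = ∑ n ∈ (A ×ˢ A).image (fun p => p.1 * p.2),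
        (#{p ∈ A ×ˢ A | p.1 * p.2 = n} : ℝ) := by
        rw [sq, ← Nat.cast_mul, ← card_product,
          card_eq_sum_card_image (fun p : ℕ × ℕ => p.1 * p.2), Nat.cast_sum]
    _ ≤ ∑ n ∈ (A ×ˢ A).image (fun p => p.1 * p.2), D :=
        sum_le_sum fun n hn => (Nat.cast_le.mpr (hfiber n)).trans (hD n hn)
    _ = _ := by rw [sum_const, nsmul_eq_mul]

lemma sum_factorization_mul_log_le {n : ℕ} {s : Finset ℕ} (hs : s ⊆ n.primeFactors) :
    ∑ p ∈ s, (n.factorization p : ℝ) * log p ≤ log n := by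
  rw [log_nat_eq_sum_factorization, Finsupp.sum, Nat.support_factorization]
  exact sum_le_sum_of_subset_of_nonneg hs fun p _ _ => by positivity

lemma factorization_le_log_div_log_two {n p : ℕ} (hp : p ∈ n.primeFactors) :
    (n.factorization p : ℝ) ≤ log n / log 2 := by
  rw [le_div_iff₀ (log_pos one_lt_two)]
  calc (n.factorization p : ℝ) * log 2 ≤ n.factorization p * log p := by
        gcongr; exact_mod_cast (Nat.prime_of_mem_primeFactors hp).two_le
    _ ≤ log n := by simpa using sum_factorization_mul_log_le (singleton_subset_iff.mpr hp)

lemma prod_factorization_add_one_of_large_le (n : ℕ) {K : ℕ} (hK : 1 < K) :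
    ((∏ p ∈ n.primeFactors with K ≤ p, (n.factorization p + 1) : ℕ) : ℝ) ≤
      2 ^ (log n / log K) := by
  set s := {p ∈ n.primeFactors | K ≤ p}
  have hexponent : ∑ p ∈ s, (n.factorization p : ℝ) ≤ log n / log K := by
    rw [le_div_iff₀ (log_pos (by exact_mod_cast hK)), sum_mul]
    refine (sum_le_sum fun p hp => ?_).trans (sum_factorization_mul_log_le (filter_subset _ _))
    gcongr
    exact_mod_cast (mem_filter.mp hp).2
  calc ((∏ p ∈ s, (n.factorization p + 1) : ℕ) : ℝ) ≤ ∏ p ∈ s, (2 : ℝ) ^ n.factorization p := by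
        push_cast
        gcongr with p
        exact_mod_cast Nat.lt_two_pow_self
    _ = 2 ^ ∑ p ∈ s, (n.factorization p : ℝ) := by
        rw [prod_pow_eq_pow_sum, ← rpow_natCast]; push_cast; rfl
    _ ≤ 2 ^ (log n / log K) := rpow_le_rpow_of_exponent_le one_le_two hexponent

lemma prod_factorization_add_one_of_small_le (n K : ℕ) :
    ((∏ p ∈ n.primeFactors with p < K, (n.factorization p + 1) : ℕ) : ℝ) ≤
      (log n / log 2 + 1) ^ K := by
  set s := {p ∈ n.primeFactors | p < K}
  have hcard : #s ≤ K :=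
    (card_le_card fun p hp => mem_range.mpr (mem_filter.mp hp).2).trans (card_range K).le
  have hbase : 1 ≤ log n / log 2 + 1 := by
    have := div_nonneg (log_natCast_nonneg n) (log_pos one_lt_two).le
    linarith
  calc ((∏ p ∈ s, (n.factorization p + 1) : ℕ) : ℝ) = ∏ p ∈ s, ((n.factorization p : ℝ) + 1) := by
        push_cast; rfl
    _ ≤ ∏ _p ∈ s, (log n / log 2 + 1) :=
        prod_le_prod (fun _ _ => by positivity) fun p hp => by
          linarith [factorization_le_log_div_log_two (mem_filter.mp hp).1]
    _ = (log n / log 2 + 1) ^ #s := prod_const _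
    _ ≤ (log n / log 2 + 1) ^ K := pow_le_pow_right₀ hbase hcard

theorem card_divisors_le_two_rpow_mul_pow (n : ℕ) {K : ℕ} (hK : 1 < K) :
    (#n.divisors : ℝ) ≤ 2 ^ (log n / log K) * (log n / log 2 + 1) ^ K := by
  rcases eq_or_ne n 0 with rfl | hn
  · simp only [Nat.divisors_zero, card_empty, CharP.cast_eq_zero]
    positivity
  rw [Nat.card_divisors hn, ← prod_filter_mul_prod_filter_not n.primeFactors (K ≤ ·)]
  simp only [not_le, Nat.cast_mul]
  exact mul_le_mul (prod_factorization_add_one_of_large_le n hK)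
    (prod_factorization_add_one_of_small_le n K) (by positivity) (by positivity)

lemma eventually_rpow_add_one_mul_log_le {c δ : ℝ} (hc₀ : 0 ≤ c) (hc₁ : c < 1) (hδ : 0 < δ) :
    ∀ᶠ x : ℝ in atTop, (x ^ c + 1) * log (3 * x) ≤ δ * (x / log x) := by
  have hlittle := (isLittleO_log_rpow_rpow_atTop 2 (sub_pos.mpr hc₁)).def
    (show 0 < δ / 4 by positivity)
  filter_upwards [hlittle, eventually_ge_atTop 3] with x hx hx₃
  have hlogx : log 3 ≤ log x := log_le_log (by norm_num) hx₃
  have hlogx₀ : 0 < log x := (log_pos (by norm_num)).trans_le hlogx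
  have hxc : 1 ≤ x ^ c := one_le_rpow (by linarith) hc₀
  rw [norm_of_nonneg (by positivity), norm_of_nonneg (by positivity), rpow_two] at hx
  have hsplit : x ^ (1 - c) * x ^ c = x := by
    rw [← rpow_add (by linarith)]; simp
  calc (x ^ c + 1) * log (3 * x) ≤ (2 * x ^ c) * (2 * log x) := by
        rw [log_mul (by norm_num) (by linarith)]
        gcongr <;> linarith
    _ = 4 * log x ^ 2 * x ^ c / log x := by field_simp; ring
    _ ≤ 4 * (δ / 4 * x ^ (1 - c)) * x ^ c / log x := by gcongr
    _ = δ * (x ^ (1 - c) * x ^ c) / log x := by ring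
    _ = δ * (x / log x) := by rw [hsplit, mul_div_assoc]

theorem eventually_forall_card_divisors_le {ε : ℝ} (hε : 0 < ε) :
    ∀ᶠ x : ℝ in atTop, ∀ n : ℕ, log n ≤ x →
      (#n.divisors : ℝ) ≤ exp ((log 2 + ε) * (x / log x)) := by
  have hlog2 : 1 / 2 < log 2 := by linarith [log_two_gt_d9]
  set c := log 2 / (log 2 + ε / 2)
  have hc₀ : 0 < c := by positivity
  have hc₁ : c < 1 := (div_lt_one (by positivity)).mpr (by linarith)
  have hc : (log 2 + ε / 2) * c = log 2 := mul_div_cancel₀ _ (by positivity)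
  filter_upwards [eventually_rpow_add_one_mul_log_le hc₀.le hc₁ (half_pos hε),
    (tendsto_log_atTop.const_mul_atTop hc₀).eventually_ge_atTop (log 2),
    eventually_ge_atTop 3] with x hsmall hlarge hx₃ n hn
  have hlogx : 0 < log x := log_pos (by linarith)
  set K := ⌈x ^ c⌉₊
  have hxc : log (x ^ c) = c * log x := by rw [log_rpow (by linarith), mul_comm]
  have hxc₂ : 2 ≤ x ^ c := by
    rwa [← log_le_log_iff two_pos (by positivity), hxc]
  have hK : 1 < K := Nat.lt_ceil.mpr (by push_cast; linarith)
  have hlogK : c * log x ≤ log K := hxc ▸ log_le_log (by positivity) (Nat.le_ceil _)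
  have hKle : (K : ℝ) ≤ x ^ c + 1 := (Nat.ceil_lt_add_one (by positivity)).le
  have hlarge_primes : (2 : ℝ) ^ (log n / log K) ≤ exp ((log 2 + ε / 2) * (x / log x)) := by
    rw [rpow_def_of_pos two_pos]
    gcongr exp ?_
    calc log 2 * (log n / log K) ≤ log 2 * (x / (c * log x)) := by gcongr
      _ = (log 2 + ε / 2) * c * (x / (c * log x)) := by rw [hc]
      _ = (log 2 + ε / 2) * (x / log x) := by field_simp
  have hsmall_primes : (log n / log 2 + 1) ^ K ≤ exp (ε / 2 * (x / log x)) := by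
    have hbase : log n / log 2 + 1 ≤ 3 * x := by
      have : log n / log 2 ≤ 2 * x := by
        rw [div_le_iff₀ (by positivity)]; nlinarith
      linarith
    calc (log n / log 2 + 1) ^ K ≤ (3 * x) ^ K := by gcongr
      _ = exp (K * log (3 * x)) := by rw [← log_pow, exp_log (by positivity)]
      _ ≤ exp ((x ^ c + 1) * log (3 * x)) := by gcongr; exact log_nonneg (by linarith)
      _ ≤ exp (ε / 2 * (x / log x)) := exp_le_exp.mpr hsmall
  calc (#n.divisors : ℝ) ≤ 2 ^ (log n / log K) * (log n / log 2 + 1) ^ K :=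
        card_divisors_le_two_rpow_mul_pow n hK
    _ ≤ exp ((log 2 + ε / 2) * (x / log x)) * exp (ε / 2 * (x / log x)) := by
        gcongr
    _ = exp ((log 2 + ε) * (x / log x)) := by rw [← exp_add]; ring_nf

lemma two_mul_div_log_two_mul_le {y : ℝ} (hy : 1 < y) :
    2 * y / log (2 * y) ≤ 2 * (y / log y) := by
  have hlogy : 0 < log y := log_pos hy
  rw [mul_div_assoc]
  gcongr
  linarith

/-- For every ε > 0 there exists Q₀ such that for all real Q ≥ Q₀ and every nonempty
finite set A of positive integers contained in [1, Q], the product set AA satisfies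
|AA| ≥ |A|²·exp((−2·log 2 − ε)·(log Q)/(log log Q)). -/
theorem stmt_3 :
    ∀ ε : ℝ, 0 < ε → ∃ Q₀ : ℝ, ∀ Q : ℝ, Q₀ ≤ Q →
      ∀ A : Finset ℕ, A.Nonempty → (∀ a ∈ A, 0 < a ∧ (a : ℝ) ≤ Q) →
        (((A ×ˢ A).image (fun p => p.1 * p.2)).card : ℝ) ≥
          (A.card : ℝ) ^ 2 *
            Real.exp ((-2 * Real.log 2 - ε) *
              (Real.log Q / Real.log (Real.log Q))) := by
  intro ε hε
  obtain ⟨Q₀, hQ₀⟩ := eventually_atTop.mp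
    (((tendsto_log_atTop.const_mul_atTop two_pos).eventually
      (eventually_forall_card_divisors_le (half_pos hε))).and
      (tendsto_log_atTop.eventually_gt_atTop 1))
  refine ⟨Q₀, fun Q hQ A _ hAQ => ?_⟩
  obtain ⟨hdivisors, hlogQ⟩ := hQ₀ Q hQ
  have hD : ∀ n ∈ (A ×ˢ A).image (fun p => p.1 * p.2), (#n.divisors : ℝ) ≤
      exp ((2 * log 2 + ε) * (log Q / log (log Q))) := by
    simp only [mem_image, mem_product, Prod.exists]
    rintro _ ⟨a, b, ⟨ha, hb⟩, rfl⟩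
    obtain ⟨ha₀, haQ⟩ := hAQ a ha
    obtain ⟨hb₀, hbQ⟩ := hAQ b hb
    have hQ : 0 < Q := (Nat.cast_pos.mpr ha₀).trans_le haQ
    refine (hdivisors _ ?_).trans (exp_le_exp.mpr ?_)
    · calc log ((a * b : ℕ) : ℝ) ≤ log (Q * Q) := by push_cast; gcongr
        _ = 2 * log Q := by rw [log_mul hQ.ne' hQ.ne', two_mul]
    · calc (log 2 + ε / 2) * (2 * log Q / log (2 * log Q))
          ≤ (log 2 + ε / 2) * (2 * (log Q / log (log Q))) := by
            gcongr; exact two_mul_div_log_two_mul_le hlogQ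
        _ = (2 * log 2 + ε) * (log Q / log (log Q)) := by ring
  have hcount := sq_card_le_card_image_mul_mul_of_card_divisors_le (fun h => (hAQ 0 h).1.false) hD
  rw [ge_iff_le, show (-2 * log 2 - ε) * (log Q / log (log Q)) =
    -((2 * log 2 + ε) * (log Q / log (log Q))) by ring, exp_neg, ← div_eq_mul_inv,
    div_le_iff₀ (exp_pos _)]
  exact hcount
end

section
/- For every ε > 0 there exists Q₀ such that for all real Q ≥ Q₀ and every finite set A of positive integers contained in [1, Q], the multiplicative energy satisfies E(A) ≤ |A|²·exp((2·log 2 + ε)·(log Q)/(log log Q)). -/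
/-!
For `a, b ∈ A` the pairs `(c, d) ∈ A²` with `c * d = a * b` are determined by `c ∣ a * b`, so
`E(A) ≤ ∑_{a, b ∈ A} τ(a b) ≤ |A|² · max_{n ≤ Q²} τ(n)`, and it remains to bound the divisor
function. Comparing `τ(n)^k = ∏ (v_p(n) + 1)^k` with `n = ∏ p^{v_p(n)}` prime by prime gives
`τ(n)^k ≤ (k + 1)^(k 2^k) n`, since only the primes `p < 2^k` can make the factor
`(v + 1)^k / p^v` exceed `1`. Taking logarithms and choosing `2^k ≈ L / M³` with `L = log Q`,
`M = log L` yields `log τ(n) ≤ (2 log 2 + o(1)) L / M` for `n ≤ Q²`.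
-/

open Finset Filter Real

lemma succ_pow_le_pow_of_two_pow_le {a k p : ℕ} (hp : 2 ^ k ≤ p) : (a + 1) ^ k ≤ p ^ a :=
  calc (a + 1) ^ k ≤ (2 ^ a) ^ k := Nat.pow_le_pow_left Nat.lt_two_pow_self k
    _ = (2 ^ k) ^ a := by rw [← pow_mul, ← pow_mul, mul_comm]
    _ ≤ p ^ a := Nat.pow_le_pow_left hp a

lemma succ_pow_le_mul_pow {a k p : ℕ} (hk : 0 < k) (hp : 2 ≤ p) :
    (a + 1) ^ k ≤ (k + 1) ^ k * p ^ a := by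
  have h : a + 1 ≤ (k + 1) * (a / k + 1) := by
    have := Nat.lt_mul_div_succ a hk
    nlinarith
  calc (a + 1) ^ k ≤ ((k + 1) * (a / k + 1)) ^ k := Nat.pow_le_pow_left h k
    _ ≤ ((k + 1) * 2 ^ (a / k)) ^ k := by gcongr; exact Nat.lt_two_pow_self
    _ = (k + 1) ^ k * 2 ^ (a / k * k) := by rw [mul_pow, ← pow_mul]
    _ ≤ (k + 1) ^ k * p ^ a := Nat.mul_le_mul_left _
        ((Nat.pow_le_pow_right two_pos (Nat.div_mul_le_self a k)).trans (Nat.pow_le_pow_left hp a))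

lemma card_divisors_pow_le {n k : ℕ} (hn : n ≠ 0) (hk : 0 < k) :
    n.divisors.card ^ k ≤ (k + 1) ^ (k * 2 ^ k) * n := by
  set c : ℕ → ℕ := fun p => if p < 2 ^ k then (k + 1) ^ k else 1
  have hc : ∏ p ∈ n.primeFactors, c p ≤ (k + 1) ^ (k * 2 ^ k) := by
    rw [← prod_filter, prod_const, ← pow_mul]
    refine Nat.pow_le_pow_right k.succ_pos (Nat.mul_le_mul_left k ?_)
    exact (card_le_card fun p hp => mem_range.2 (mem_filter.1 hp).2).trans_eq (card_range _)
  calc n.divisors.card ^ k = ∏ p ∈ n.primeFactors, (n.factorization p + 1) ^ k := by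
        rw [Nat.card_divisors hn, prod_pow]
    _ ≤ ∏ p ∈ n.primeFactors, c p * p ^ n.factorization p := by
        refine prod_le_prod' fun p hp => ?_
        have hp2 := (Nat.prime_of_mem_primeFactors hp).two_le
        simp only [c]
        split_ifs with h
        · exact succ_pow_le_mul_pow hk hp2
        · rw [one_mul]
          exact succ_pow_le_pow_of_two_pow_le (not_lt.1 h)
    _ = (∏ p ∈ n.primeFactors, c p) * n := by
        rw [prod_mul_distrib, ← Nat.prod_primeFactors_pow_factorization hn]
    _ ≤ (k + 1) ^ (k * 2 ^ k) * n := Nat.mul_le_mul_right n hc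

lemma log_card_divisors_le {n k : ℕ} (hn : n ≠ 0) (hk : 0 < k) :
    log n.divisors.card ≤ 2 ^ k * log (k + 1) + log n / k := by
  have hτ : 0 < n.divisors.card := card_pos.2 (Nat.nonempty_divisors.2 hn)
  have hk' : (0 : ℝ) < k := by exact_mod_cast hk
  have h : (n.divisors.card : ℝ) ^ k ≤ ((k : ℝ) + 1) ^ (k * 2 ^ k) * n := by
    exact_mod_cast card_divisors_pow_le hn hk
  have hlog := log_le_log (by positivity) h
  rw [log_pow, log_mul (by positivity) (by exact_mod_cast hn), log_pow] at hlog
  rw [← mul_le_mul_iff_of_pos_left hk', mul_add, mul_div_cancel₀ _ hk'.ne']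
  push_cast at hlog
  linarith

lemma two_pow_mul_log_succ_le {k : ℕ} {M : ℝ} (hM : 1 ≤ M) (hk : k * log 2 ≤ M - 3 * log M) :
    2 ^ k * log (k + 1) ≤ exp M / M ^ 2 := by
  have hM0 : 0 < M := by linarith
  have h2k : (2 : ℝ) ^ k ≤ exp M / M ^ 3 := by
    calc (2 : ℝ) ^ k = exp (k * log 2) := by rw [exp_nat_mul, exp_log two_pos]
      _ ≤ exp (M - 3 * log M) := exp_le_exp.2 hk
      _ = exp M / M ^ 3 := by
        rw [exp_sub, show 3 * log M = log (M ^ 3) by rw [log_pow]; norm_num, exp_log (by positivity)]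
  have hlog : log (k + 1) ≤ M := by
    have hk1 : ((k + 1 : ℕ) : ℝ) ≤ (2 : ℝ) ^ k := by exact_mod_cast Nat.lt_two_pow_self
    calc log (k + 1) ≤ log (2 ^ k) := log_le_log (by positivity) (by exact_mod_cast hk1)
      _ = k * log 2 := by rw [log_pow]
      _ ≤ M := by linarith [log_nonneg hM]
  calc 2 ^ k * log (k + 1) ≤ exp M / M ^ 3 * M :=
        mul_le_mul h2k hlog (log_nonneg (by linarith [k.cast_nonneg (α := ℝ)])) (by positivity)
    _ = exp M / M ^ 2 := by field_simp

lemma eventually_mul_log_add_le (a b : ℝ) {δ : ℝ} (hδ : 0 < δ) :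
    ∀ᶠ x : ℝ in atTop, a * log x + b ≤ δ * x := by
  filter_upwards [((isLittleO_log_id_atTop.const_mul_left a).add
      (Asymptotics.isLittleO_const_id_atTop b)).def hδ, eventually_ge_atTop 0] with x hx hx0
  rw [id, norm_of_nonneg hx0] at hx
  exact (le_abs_self _).trans hx

lemma exists_nat_mul_log_two_mem_Ioc {y : ℝ} (hy : 0 ≤ y) :
    ∃ k : ℕ, k * log 2 ∈ Set.Ioc (y - log 2) y := by
  have hl2 : 0 < log 2 := log_pos one_lt_two
  refine ⟨⌊y / log 2⌋₊, ?_, (le_div_iff₀ hl2).1 (Nat.floor_le (div_nonneg hy hl2.le))⟩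
  have := (div_lt_iff₀ hl2).1 (Nat.lt_floor_add_one (y / log 2))
  linarith

lemma eventually_exists_two_pow_mul_log_add_div_le {ε : ℝ} (hε : 0 < ε) :
    ∀ᶠ M : ℝ in atTop, ∃ k : ℕ, 0 < k ∧
      2 ^ k * log (k + 1) + 2 * exp M / k ≤ (2 * log 2 + ε) * (exp M / M) := by
  have hl2 : 0 < log 2 := log_pos one_lt_two
  have hc : 0 < 2 * log 2 + ε / 2 := by positivity
  filter_upwards [eventually_mul_log_add_le 3 (log 2) (div_pos (half_pos hε) hc),
    eventually_ge_atTop (2 / ε), eventually_ge_atTop 1] with M hM hMε hM1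
  rw [div_mul_eq_mul_div, le_div_iff₀' hc] at hM
  have hM0 : 0 < M := by linarith
  obtain ⟨k, hk_ge, hk_le⟩ :=
    exists_nat_mul_log_two_mem_Ioc (y := M - 3 * log M) (by nlinarith [log_nonneg hM1])
  have hkM : 2 * M ≤ (2 * log 2 + ε / 2) * k := le_of_mul_le_mul_right (by nlinarith) hl2
  have hk : 0 < (k : ℝ) := by nlinarith
  refine ⟨k, by exact_mod_cast hk, ?_⟩
  have h1 : 2 ^ k * log (k + 1) ≤ ε / 2 * (exp M / M) := by
    have hMinv : 1 / M ≤ ε / 2 := by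
      rw [div_le_iff₀ hM0]
      rw [div_le_iff₀ hε] at hMε
      linarith
    calc 2 ^ k * log (k + 1) ≤ exp M / M ^ 2 := two_pow_mul_log_succ_le hM1 hk_le
      _ = 1 / M * (exp M / M) := by field_simp
      _ ≤ ε / 2 * (exp M / M) := by gcongr
  have h2 : 2 * exp M / k ≤ (2 * log 2 + ε / 2) * (exp M / M) := by
    calc 2 * exp M / k = exp M / M * (2 * M) / k := by field_simp
      _ ≤ exp M / M * ((2 * log 2 + ε / 2) * k) / k := by gcongr
      _ = (2 * log 2 + ε / 2) * (exp M / M) := by field_simp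
  linarith

lemma eventually_card_divisors_le_exp {ε : ℝ} (hε : 0 < ε) :
    ∀ᶠ Q : ℝ in atTop, ∀ n : ℕ, n ≠ 0 → (n : ℝ) ≤ Q ^ 2 →
      (n.divisors.card : ℝ) ≤ exp ((2 * log 2 + ε) * (log Q / log (log Q))) := by
  filter_upwards [(tendsto_log_atTop.comp tendsto_log_atTop).eventually
      (eventually_exists_two_pow_mul_log_add_div_le hε), eventually_gt_atTop 1]
    with Q ⟨k, hk, hkQ⟩ hQ n hn hnQ
  rw [Function.comp_apply, exp_log (log_pos hQ)] at hkQ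
  have hlog_n : log n ≤ 2 * log Q := by
    calc log n ≤ log (Q ^ 2) := log_le_log (by positivity) hnQ
      _ = 2 * log Q := by rw [log_pow]; norm_num
  have hτ : (0 : ℝ) < n.divisors.card := by
    exact_mod_cast card_pos.2 (Nat.nonempty_divisors.2 hn)
  rw [← exp_log hτ, exp_le_exp]
  calc log n.divisors.card ≤ 2 ^ k * log (k + 1) + log n / k := log_card_divisors_le hn hk
    _ ≤ 2 ^ k * log (k + 1) + 2 * log Q / k := by gcongr
    _ ≤ (2 * log 2 + ε) * (log Q / log (log Q)) := hkQ

lemma card_filter_mul_eq_le_card_divisors (s t : Finset ℕ) {n : ℕ} (hn : n ≠ 0) :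
    ((s ×ˢ t).filter fun y => n = y.1 * y.2).card ≤ n.divisors.card := by
  calc _ ≤ n.divisorsAntidiagonal.card :=
        card_le_card fun y hy => Nat.mem_divisorsAntidiagonal.2 ⟨(mem_filter.1 hy).2.symm, hn⟩
    _ = n.divisors.card := by rw [← Nat.map_div_right_divisors, card_map]

lemma card_filter_mul_eq_mul_le_sum_card_divisors {A : Finset ℕ} (hA : ∀ a ∈ A, 0 < a) :
    ((A ×ˢ A ×ˢ A ×ˢ A).filter fun q => q.1 * q.2.1 = q.2.2.1 * q.2.2.2).card ≤
      ∑ p ∈ A ×ˢ A, (p.1 * p.2).divisors.card := by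
  rw [card_filter, sum_product, sum_product]
  refine sum_le_sum fun a ha => ?_
  rw [sum_product]
  refine sum_le_sum fun b hb => ?_
  rw [← card_filter]
  exact card_filter_mul_eq_le_card_divisors A A (Nat.mul_pos (hA a ha) (hA b hb)).ne'

/-- For every ε > 0 there exists Q₀ such that for all real Q ≥ Q₀ and every finite
set A of positive integers contained in [1, Q], the multiplicative energy E(A),
i.e. the number of quadruples (a₁, a₂, a₃, a₄) ∈ A⁴ with a₁·a₂ = a₃·a₄, satisfies
E(A) ≤ |A|²·exp((2·log 2 + ε)·(log Q)/(log log Q)). -/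
theorem stmt_4 :
    ∀ ε : ℝ, 0 < ε → ∃ Q₀ : ℝ, ∀ Q : ℝ, Q₀ ≤ Q →
      ∀ A : Finset ℕ, (∀ a ∈ A, 0 < a ∧ (a : ℝ) ≤ Q) →
        (((A ×ˢ A ×ˢ A ×ˢ A).filter
            (fun q => q.1 * q.2.1 = q.2.2.1 * q.2.2.2)).card : ℝ) ≤
          (A.card : ℝ) ^ 2 *
            Real.exp ((2 * Real.log 2 + ε) *
              (Real.log Q / Real.log (Real.log Q))) := by
  intro ε hε
  obtain ⟨Q₀, hQ₀⟩ := eventually_atTop.1 (eventually_card_divisors_le_exp hε)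
  refine ⟨Q₀, fun Q hQ A hA => ?_⟩
  set C := exp ((2 * log 2 + ε) * (log Q / log (log Q)))
  have hτ : ∀ p ∈ A ×ˢ A, ((p.1 * p.2).divisors.card : ℝ) ≤ C := by
    rintro ⟨a, b⟩ hab
    obtain ⟨⟨ha, haQ⟩, hb, hbQ⟩ := And.imp (hA a) (hA b) (mem_product.1 hab)
    refine hQ₀ Q hQ _ (Nat.mul_pos ha hb).ne' ?_
    push_cast
    rw [sq]
    exact mul_le_mul haQ hbQ (by positivity) ((Nat.cast_nonneg a).trans haQ)
  calc _ ≤ ∑ p ∈ A ×ˢ A, ((p.1 * p.2).divisors.card : ℝ) := by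
        exact_mod_cast card_filter_mul_eq_mul_le_sum_card_divisors fun a ha => (hA a ha).1
    _ ≤ ∑ p ∈ A ×ˢ A, C := sum_le_sum hτ
    _ = (A.card : ℝ) ^ 2 * C := by rw [sum_const, card_product, nsmul_eq_mul]; push_cast; ring
end

section
/- For every η > 0 there exist ε > 0 and Q₀ such that for all real Q ≥ Q₀ and every positive integer n with n ≤ Q and rad(n) ≤ Q^ε, the number of divisors satisfies τ(n) ≤ exp(η·(log Q)/(log log Q)). -/
/-!
Write `L = log Q` and `τ(n) = ∏_{p ∣ n} (a_p + 1)`, and split the primes of `n` at `√L`.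
There are at most `√L` small primes and each exponent is `O(L)`, so they contribute
`exp(O(√L log L)) = exp(o(L / log L))`. A large prime has `log p ≥ (log L) / 2`, so there are
at most `2εL / log L` of them (their product divides `rad n ≤ Q^ε`) and their exponents sum to
at most `2L / log L` (since `n ≤ Q`); the bound `a + 1 ≤ ε⁻¹ exp(ε a)` turns this into the
factor `exp(2ε (log ε⁻¹ + 1) L / log L)`, and `ε (log ε⁻¹ + 1) → 0` as `ε → 0`.
-/

open Finset Filter Real Topology

lemma add_one_le_inv_mul_exp_mul {ε : ℝ} (hε0 : 0 < ε) (hε1 : ε ≤ 1) (x : ℝ) :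
    x + 1 ≤ ε⁻¹ * exp (ε * x) :=
  calc x + 1 ≤ x + ε⁻¹ := by gcongr; exact (one_le_inv₀ hε0).2 hε1
  _ = ε⁻¹ * (ε * x + 1) := by field_simp
  _ ≤ ε⁻¹ * exp (ε * x) := by gcongr; exact add_one_le_exp _

lemma prod_add_one_le_exp {ι : Type*} (s : Finset ι) {a : ι → ℝ} (ha : ∀ i ∈ s, 0 ≤ a i)
    {ε : ℝ} (hε0 : 0 < ε) (hε1 : ε ≤ 1) :
    ∏ i ∈ s, (a i + 1) ≤ exp (#s * log ε⁻¹ + ε * ∑ i ∈ s, a i) :=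
  calc ∏ i ∈ s, (a i + 1) ≤ ∏ i ∈ s, ε⁻¹ * exp (ε * a i) :=
        prod_le_prod (fun i hi => by linarith [ha i hi])
          fun i _ => add_one_le_inv_mul_exp_mul hε0 hε1 _
  _ = exp (#s * log ε⁻¹ + ε * ∑ i ∈ s, a i) := by
        rw [prod_mul_distrib, prod_const, ← exp_sum, exp_add, exp_nat_mul, mul_sum,
          exp_log (by positivity)]

lemma prod_le_exp_mul_log {ι : Type*} (s : Finset ι) {f : ι → ℝ} {B T : ℝ}
    (hf0 : ∀ i ∈ s, 0 ≤ f i) (hfB : ∀ i ∈ s, f i ≤ B) (hB : 1 ≤ B) (hs : (#s : ℝ) ≤ T) :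
    ∏ i ∈ s, f i ≤ exp (T * log B) :=
  calc ∏ i ∈ s, f i ≤ ∏ _i ∈ s, B := prod_le_prod hf0 hfB
  _ = exp (#s * log B) := by rw [prod_const, exp_nat_mul, exp_log (by linarith)]
  _ ≤ exp (T * log B) := by gcongr; exact log_nonneg hB

lemma card_filter_cast_le_le {s : Finset ℕ} (hs : 0 ∉ s) {T : ℝ} (hT : 0 ≤ T) :
    (#(s.filter fun p : ℕ => (p : ℝ) ≤ T) : ℝ) ≤ T := by
  have hsub : s.filter (fun p : ℕ => (p : ℝ) ≤ T) ⊆ Icc 1 ⌊T⌋₊ := fun p hp => by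
    obtain ⟨hps, hpT⟩ := mem_filter.1 hp
    exact mem_Icc.2 ⟨Nat.one_le_iff_ne_zero.2 (ne_of_mem_of_not_mem hps hs), Nat.le_floor hpT⟩
  calc (#(s.filter fun p : ℕ => (p : ℝ) ≤ T) : ℝ) ≤ #(Icc 1 ⌊T⌋₊) := by
        exact_mod_cast card_le_card hsub
  _ = ⌊T⌋₊ := by simp
  _ ≤ T := Nat.floor_le hT

lemma Real.log_nat_eq_sum_primeFactors (n : ℕ) :
    log n = ∑ p ∈ n.primeFactors, n.factorization p * log p := by
  rw [log_nat_eq_sum_factorization, Finsupp.sum, Nat.support_factorization]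

lemma Real.log_prod_primeFactors (n : ℕ) :
    log (∏ p ∈ n.primeFactors, p : ℕ) = ∑ p ∈ n.primeFactors, log p := by
  push_cast
  exact log_prod fun p hp => by exact_mod_cast (Nat.prime_of_mem_primeFactors hp).ne_zero

lemma factorization_mul_log_two_le {n p : ℕ} (hp : p ∈ n.primeFactors) :
    (n.factorization p : ℝ) * log 2 ≤ log n :=
  calc (n.factorization p : ℝ) * log 2 ≤ n.factorization p * log p := by
        gcongr; exact_mod_cast (Nat.prime_of_mem_primeFactors hp).two_le
  _ ≤ log n := by
        rw [log_nat_eq_sum_primeFactors n]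
        exact single_le_sum (f := fun p => (n.factorization p : ℝ) * log p)
          (fun q _ => by positivity) hp

lemma factorization_add_one_le_sq {n p : ℕ} (hp : p ∈ n.primeFactors) {L : ℝ} (hL : 3 ≤ L)
    (hn : log n ≤ L) : (n.factorization p : ℝ) + 1 ≤ L ^ 2 := by
  have := factorization_mul_log_two_le hp
  nlinarith [log_two_gt_d9, Nat.cast_nonneg (α := ℝ) (n.factorization p)]

lemma sum_mul_log_le_sum_mul_log {s t : Finset ℕ} (hst : s ⊆ t) {w : ℕ → ℝ}
    (hw : ∀ p ∈ t, 0 ≤ w p) {T : ℝ} (hT : 0 < T) (hs : ∀ p ∈ s, T ≤ p) :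
    (∑ p ∈ s, w p) * log T ≤ ∑ p ∈ t, w p * log p :=
  calc (∑ p ∈ s, w p) * log T = ∑ p ∈ s, w p * log T := sum_mul _ _ _
  _ ≤ ∑ p ∈ s, w p * log p :=
        sum_le_sum fun p hp => mul_le_mul_of_nonneg_left (log_le_log hT (hs p hp)) (hw p (hst hp))
  _ ≤ ∑ p ∈ t, w p * log p :=
        sum_le_sum_of_subset_of_nonneg hst fun p hp _ => mul_nonneg (hw p hp) (log_natCast_nonneg p)

theorem card_divisors_le_exp {n : ℕ} (hn : n ≠ 0) {B T ε : ℝ} (hB1 : 1 ≤ B)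
    (hB : ∀ p ∈ n.primeFactors, (n.factorization p : ℝ) + 1 ≤ B) (hT : 1 < T)
    (hε0 : 0 < ε) (hε1 : ε ≤ 1) :
    (#n.divisors : ℝ) ≤ exp (T * log B +
      (log (∏ p ∈ n.primeFactors, p : ℕ) * log ε⁻¹ + ε * log n) / log T) := by
  set a : ℕ → ℝ := fun p => n.factorization p
  set small := n.primeFactors.filter fun p : ℕ => (p : ℝ) ≤ T
  set large := n.primeFactors.filter fun p : ℕ => ¬ (p : ℝ) ≤ T
  have hlarge : ∀ p ∈ large, T ≤ p := fun p hp => (not_le.1 (mem_filter.1 hp).2).le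
  have hcard : (#large : ℝ) * log T ≤ log (∏ p ∈ n.primeFactors, p : ℕ) := by
    rw [log_prod_primeFactors, card_eq_sum_ones, Nat.cast_sum]
    simpa only [Nat.cast_one, one_mul] using
      sum_mul_log_le_sum_mul_log (filter_subset _ n.primeFactors) (w := fun _ => 1)
        (fun _ _ => zero_le_one) (by linarith) hlarge
  have hsum : (∑ p ∈ large, a p) * log T ≤ log n := by
    rw [log_nat_eq_sum_primeFactors n]
    exact sum_mul_log_le_sum_mul_log (filter_subset _ n.primeFactors)
      (fun _ _ => by positivity) (by linarith) hlarge
  have hlogT : 0 < log T := log_pos hT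
  have hlogε : 0 ≤ log ε⁻¹ := log_nonneg ((one_le_inv₀ hε0).2 hε1)
  have hτ : (#n.divisors : ℝ) = (∏ p ∈ small, (a p + 1)) * ∏ p ∈ large, (a p + 1) := by
    rw [prod_filter_mul_prod_filter_not, Nat.card_divisors hn]
    push_cast
    rfl
  rw [hτ, exp_add]
  refine mul_le_mul ?_ ?_ (prod_nonneg fun p _ => by positivity) (exp_nonneg _)
  · exact prod_le_exp_mul_log _ (fun p _ => by positivity)
      (fun p hp => hB p (mem_filter.1 hp).1) hB1
      (card_filter_cast_le_le (fun h => by simp at h) (by linarith))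
  · calc ∏ p ∈ large, (a p + 1) ≤ exp (#large * log ε⁻¹ + ε * ∑ p ∈ large, a p) :=
          prod_add_one_le_exp _ (fun p _ => by positivity) hε0 hε1
    _ ≤ _ := by
          gcongr
          rw [le_div_iff₀ hlogT]
          nlinarith

lemma exists_mul_log_inv_add_one_le {δ : ℝ} (hδ : 0 < δ) :
    ∃ ε, 0 < ε ∧ ε ≤ 1 ∧ ε * (log ε⁻¹ + 1) ≤ δ := by
  have hlim : Tendsto (fun x => x - x * log x) (𝓝[>] 0) (𝓝 0) := by
    have hcont : Continuous fun x : ℝ => x - x * log x := continuous_id.sub continuous_mul_log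
    simpa using (hcont.tendsto 0).mono_left nhdsWithin_le_nhds
  obtain ⟨ε, hεδ, hε⟩ := ((hlim.eventually (ge_mem_nhds hδ)).and (Ioc_mem_nhdsGT one_pos)).exists
  exact ⟨ε, hε.1, hε.2, by rw [log_inv]; linarith⟩

lemma eventually_four_mul_log_sq_le {η : ℝ} (hη : 0 < η) :
    ∀ᶠ L in atTop, 3 ≤ L ∧ 4 * log L ^ 2 ≤ η * √L := by
  have h := (isLittleO_log_rpow_rpow_atTop 2 one_half_pos).bound (c := η / 4) (by positivity)
  filter_upwards [h, eventually_ge_atTop 3] with L hL hL3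
  refine ⟨hL3, ?_⟩
  rw [rpow_two, ← sqrt_eq_rpow, norm_of_nonneg (by positivity),
    norm_of_nonneg (by positivity)] at hL
  linarith

lemma sqrt_mul_log_sq_add_div_log_sqrt_le {η ε L x y : ℝ} (hL : 3 ≤ L)
    (hLη : 4 * log L ^ 2 ≤ η * √L) (hε0 : 0 < ε) (hε1 : ε ≤ 1)
    (hεη : ε * (log ε⁻¹ + 1) ≤ η / 4) (hx : x ≤ ε * L) (hy : y ≤ L) :
    √L * log (L ^ 2) + (x * log ε⁻¹ + ε * y) / log √L ≤ η * (L / log L) := by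
  have hLL : 0 < log L := log_pos (by linarith)
  have hsqrt : 0 < √L := sqrt_pos.2 (by linarith)
  have hsmall : √L * log (L ^ 2) ≤ η / 2 * (L / log L) := by
    rw [log_pow, mul_div_assoc', le_div_iff₀ hLL]
    calc √L * (2 * log L) * log L = √L * (4 * log L ^ 2) / 2 := by ring
    _ ≤ √L * (η * √L) / 2 := by gcongr
    _ = η / 2 * L := by rw [mul_left_comm, mul_self_sqrt (by linarith)]; ring
  have hlarge : (x * log ε⁻¹ + ε * y) / log √L ≤ η / 2 * (L / log L) := by
    have hlogε : 0 ≤ log ε⁻¹ := log_nonneg ((one_le_inv₀ hε0).2 hε1)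
    rw [log_sqrt (by linarith), div_le_iff₀ (by positivity)]
    calc x * log ε⁻¹ + ε * y ≤ ε * L * log ε⁻¹ + ε * L := by gcongr
    _ = ε * (log ε⁻¹ + 1) * L := by ring
    _ ≤ η / 4 * L := by gcongr
    _ = η / 2 * (L / log L) * (log L / 2) := by field_simp; norm_num
  linarith

/-- For every η > 0 there exist ε > 0 and Q₀ such that for all real Q ≥ Q₀ and every
positive integer n with n ≤ Q and rad(n) ≤ Q^ε (rad(n) = product of the distinct prime
divisors of n), the number of divisors satisfies τ(n) ≤ exp(η·(log Q)/(log log Q)). -/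
theorem stmt_7 :
    ∀ η : ℝ, 0 < η → ∃ ε : ℝ, 0 < ε ∧ ∃ Q₀ : ℝ, ∀ Q : ℝ, Q₀ ≤ Q →
      ∀ n : ℕ, 0 < n → (n : ℝ) ≤ Q →
        ((∏ p ∈ n.primeFactors, p : ℕ) : ℝ) ≤ Q ^ ε →
        (n.divisors.card : ℝ) ≤
          Real.exp (η * (Real.log Q / Real.log (Real.log Q))) := by
  intro η hη
  obtain ⟨ε, hε0, hε1, hεη⟩ := exists_mul_log_inv_add_one_le (div_pos hη four_pos)
  obtain ⟨L₀, hL₀⟩ := eventually_atTop.1 (eventually_four_mul_log_sq_le hη)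
  refine ⟨ε, hε0, exp L₀, fun Q hQ n hn hnQ hrad => ?_⟩
  have hQ0 : 0 < Q := (exp_pos _).trans_le hQ
  set L := log Q
  obtain ⟨hL3, hLη⟩ := hL₀ L ((le_log_iff_exp_le hQ0).2 hQ)
  have hlogn : log n ≤ L := log_le_log (by exact_mod_cast hn) hnQ
  have hlograd : log (∏ p ∈ n.primeFactors, p : ℕ) ≤ ε * L := by
    rw [← log_rpow hQ0]
    exact log_le_log
      (Nat.cast_pos.2 (prod_pos fun p hp => (Nat.prime_of_mem_primeFactors hp).pos)) hrad
  calc (#n.divisors : ℝ) ≤ exp (√L * log (L ^ 2) +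
        (log (∏ p ∈ n.primeFactors, p : ℕ) * log ε⁻¹ + ε * log n) / log √L) :=
        card_divisors_le_exp hn.ne' (by nlinarith)
          (fun p hp => factorization_add_one_le_sq hp hL3 hlogn)
          (lt_sqrt_of_sq_lt (by nlinarith)) hε0 hε1
  _ ≤ exp (η * (L / log L)) :=
        exp_le_exp.2 (sqrt_mul_log_sq_add_div_log_sqrt_le hL3 hLη hε0 hε1 hεη hlograd hlogn)
end

section
/- For every δ with 0 < δ ≤ 1/2 and every η > 0 there exists Q₀ such that for all real Q ≥ Q₀, every squarefree positive integer n with n ≤ Q, and every real z with 1 ≤ z ≤ Q^δ, the number of divisors of n that are at most z satisfies τ(n, z) ≤ exp((δ·log(1/δ) + (1−δ)·log(1/(1−δ)) + η)·(log Q)/(log log Q)). -/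
/-!
Split the prime factors of `n` at `y = (log Q) ^ α` with `α = 1 / (1 + ε)`. At most `y` of them
are small, contributing a factor `2 ^ y = exp (o (log Q / log log Q))`. A divisor `d ≤ z ≤ Q ^ δ`
has at most `m = δ log Q / log y` of the `K ≤ log Q / log y` large primes, and Rankin's trick
bounds the number of subsets of size at most `m` of a `K`-set by `(1 + x) ^ K / x ^ m` for any
`0 < x ≤ 1`. The choice `x = δ / (1 - δ)` makes the exponent `(log Q / log y) · H(δ)`, with `H`
the binary entropy, and `log y = log log Q / (1 + ε)`.
-/

open Finset Real Asymptotics Filter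

lemma pow_card_filter_lt_primeFactors_le {y : ℝ} (hy : 0 ≤ y) {d : ℕ} (hd : d ≠ 0) :
    y ^ #{p ∈ d.primeFactors | y < (p : ℕ)} ≤ d := by
  calc y ^ #{p ∈ d.primeFactors | y < (p : ℕ)} = ∏ p ∈ d.primeFactors with y < (p : ℕ), y :=
        (prod_const y).symm
    _ ≤ ∏ p ∈ d.primeFactors with y < (p : ℕ), (p : ℝ) :=
        prod_le_prod (fun _ _ => hy) fun p hp => (mem_filter.1 hp).2.le
    _ = ((∏ p ∈ d.primeFactors with y < (p : ℕ), p : ℕ) : ℝ) := by push_cast; rfl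
    _ ≤ d := by
        exact_mod_cast Nat.le_of_dvd (Nat.pos_of_ne_zero hd)
          ((prod_dvd_prod_of_subset _ _ _ (filter_subset _ _)).trans d.prod_primeFactors_dvd)

lemma card_filter_lt_primeFactors_le_log_div {y : ℝ} (hy : 1 < y) {d : ℕ} (hd : d ≠ 0) :
    (#{p ∈ d.primeFactors | y < (p : ℕ)} : ℝ) ≤ log d / log y := by
  rw [le_div_iff₀ (log_pos hy), ← log_pow]
  exact log_le_log (pow_pos (by linarith) _) (pow_card_filter_lt_primeFactors_le (by linarith) hd)

lemma card_filter_le_primeFactors_le {y : ℝ} (hy : 0 ≤ y) (n : ℕ) :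
    (#{p ∈ n.primeFactors | (p : ℕ) ≤ y} : ℝ) ≤ y := by
  have hsub : {p ∈ n.primeFactors | (p : ℕ) ≤ y} ⊆ Icc 1 ⌊y⌋₊ := fun p hp => by
    obtain ⟨hp, hpy⟩ := mem_filter.1 hp
    exact mem_Icc.2 ⟨(Nat.prime_of_mem_primeFactors hp).one_le, Nat.le_floor hpy⟩
  calc _ ≤ (⌊y⌋₊ : ℝ) := by exact_mod_cast (card_le_card hsub).trans (by simp)
    _ ≤ y := Nat.floor_le hy

-- A divisor of a squarefree number is determined by its set of prime factors.
lemma card_le_two_pow_mul_card_filter_powerset {n : ℕ} (hn : Squarefree n) (P : ℕ → Prop)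
    [DecidablePred P] {D : Finset ℕ} (hD : D ⊆ n.divisors) {m : ℕ}
    (hm : ∀ d ∈ D, #{p ∈ d.primeFactors | P p} ≤ m) :
    #D ≤ 2 ^ #{p ∈ n.primeFactors | ¬ P p} *
      #{U ∈ {p ∈ n.primeFactors | P p}.powerset | #U ≤ m} := by
  have hdvd : ∀ d ∈ D, d ∣ n := fun d hd => Nat.dvd_of_mem_divisors (hD hd)
  rw [← card_powerset, ← card_product]
  refine card_le_card_of_injOn
    (fun d => ({p ∈ d.primeFactors | ¬ P p}, {p ∈ d.primeFactors | P p})) (fun d hd => ?_) ?_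
  · have hsub := Nat.primeFactors_mono (hdvd d hd) hn.ne_zero
    exact mem_product.2 ⟨mem_powerset.2 (filter_subset_filter _ hsub),
      mem_filter.2 ⟨mem_powerset.2 (filter_subset_filter _ hsub), hm d hd⟩⟩
  · intro d₁ hd₁ d₂ hd₂ h
    obtain ⟨h₁, h₂⟩ := Prod.mk.inj h
    have hpf : d₁.primeFactors = d₂.primeFactors := by
      rw [← filter_union_filter_not_eq P d₁.primeFactors,
        ← filter_union_filter_not_eq P d₂.primeFactors, h₁, h₂]
    rw [← Nat.prod_primeFactors_of_squarefree (hn.squarefree_of_dvd (hdvd d₁ hd₁)),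
      ← Nat.prod_primeFactors_of_squarefree (hn.squarefree_of_dvd (hdvd d₂ hd₂)), hpf]

lemma card_filter_powerset_card_le_mul_pow_le {ι R : Type*} [CommSemiring R] [PartialOrder R]
    [IsOrderedRing R] (s : Finset ι) (m : ℕ) {x : R} (hx₀ : 0 ≤ x) (hx₁ : x ≤ 1) :
    (#{U ∈ s.powerset | #U ≤ m} : R) * x ^ m ≤ (1 + x) ^ #s := by
  calc (#{U ∈ s.powerset | #U ≤ m} : R) * x ^ m = ∑ U ∈ s.powerset with #U ≤ m, x ^ m := by
        rw [sum_const, nsmul_eq_mul]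
    _ ≤ ∑ U ∈ s.powerset with #U ≤ m, x ^ #U :=
        sum_le_sum fun U hU => pow_le_pow_of_le_one hx₀ hx₁ (mem_filter.1 hU).2
    _ ≤ ∑ U ∈ s.powerset, x ^ #U :=
        sum_le_sum_of_subset_of_nonneg (filter_subset _ _) fun _ _ _ => pow_nonneg hx₀ _
    _ = (1 + x) ^ #s := by
        rw [add_comm, ← sum_pow_mul_eq_add_pow]; simp

theorem card_filter_divisors_le_exp {n : ℕ} (hn : Squarefree n) {y z x : ℝ} (hy : 1 < y)
    (hz : 1 ≤ z) (hx₀ : 0 < x) (hx₁ : x ≤ 1) :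
    (#{d ∈ n.divisors | (d : ℕ) ≤ z} : ℝ) ≤
      exp (y * log 2 + (log n * log (1 + x) - log z * log x) / log y) := by
  have hlogy := log_pos hy
  set m := ⌊log z / log y⌋₊
  have hm : ∀ d ∈ {d ∈ n.divisors | (d : ℕ) ≤ z}, #{p ∈ d.primeFactors | y < (p : ℕ)} ≤ m := by
    intro d hd
    obtain ⟨hdn, hdz⟩ := mem_filter.1 hd
    have hd₀ := Nat.pos_of_mem_divisors hdn
    refine Nat.le_floor ((card_filter_lt_primeFactors_le_log_div hy hd₀.ne').trans ?_)
    gcongr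
  have hcount := card_le_two_pow_mul_card_filter_powerset hn (fun p : ℕ => y < p)
    (filter_subset _ _) hm
  have hrankin := card_filter_powerset_card_le_mul_pow_le
    {p ∈ n.primeFactors | y < (p : ℕ)} m hx₀.le hx₁
  set s := #{p ∈ n.primeFactors | ¬ y < (p : ℕ)}
  set K := #{p ∈ n.primeFactors | y < (p : ℕ)}
  have hs : (s : ℝ) ≤ y := by
    simpa only [s, not_lt] using card_filter_le_primeFactors_le (by linarith) n
  have hK : (K : ℝ) ≤ log n / log y := card_filter_lt_primeFactors_le_log_div hy hn.ne_zero
  have hmz : (m : ℝ) ≤ log z / log y := Nat.floor_le (div_nonneg (log_nonneg hz) hlogy.le)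
  calc (#{d ∈ n.divisors | (d : ℕ) ≤ z} : ℝ) ≤ 2 ^ s * (1 + x) ^ K / x ^ m := by
        rw [le_div_iff₀ (by positivity)]
        calc _ ≤ 2 ^ s * (#{U ∈ {p ∈ n.primeFactors | y < (p : ℕ)}.powerset | #U ≤ m} : ℝ)
                * x ^ m := by gcongr; exact_mod_cast hcount
          _ ≤ 2 ^ s * (1 + x) ^ K := by rw [mul_assoc]; gcongr
    _ = exp (s * log 2 + K * log (1 + x) - m * log x) := by
        rw [exp_sub, exp_add, exp_nat_mul, exp_nat_mul, exp_nat_mul, exp_log two_pos,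
          exp_log (by linarith), exp_log hx₀]
    _ ≤ exp (y * log 2 + (log n * log (1 + x) - log z * log x) / log y) := by
        have h₁ := mul_le_mul_of_nonneg_right hs (log_nonneg one_le_two)
        have h₂ := mul_le_mul_of_nonneg_right hK (log_nonneg (by linarith : (1 : ℝ) ≤ 1 + x))
        have h₃ := mul_le_mul_of_nonpos_right hmz (log_nonpos hx₀.le hx₁)
        have : (log n * log (1 + x) - log z * log x) / log y =
            log n / log y * log (1 + x) - log z / log y * log x := by ring
        rw [exp_le_exp, this]
        linarith

lemma binEntropy_eq_log_one_add_sub_mul_log {δ : ℝ} (h₀ : 0 < δ) (h₁ : δ < 1) :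
    binEntropy δ = log (1 + δ / (1 - δ)) - δ * log (δ / (1 - δ)) := by
  have h : 1 + δ / (1 - δ) = (1 - δ)⁻¹ := by
    field_simp [show 1 - δ ≠ 0 by linarith]; ring
  rw [binEntropy, h, log_div h₀.ne' (by linarith), log_inv, log_inv]
  ring

lemma isLittleO_rpow_mul_log_atTop {α : ℝ} (hα : α < 1) :
    (fun t => t ^ α * log t) =o[atTop] id := by
  refine ((isBigO_refl (fun t : ℝ => t ^ α) atTop).mul_isLittleO
    (isLittleO_log_rpow_atTop (sub_pos.2 hα))).congr' EventuallyEq.rfl ?_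
  filter_upwards [eventually_gt_atTop 0] with t ht
  rw [← rpow_add ht, add_sub_cancel, rpow_one, id]

lemma eventually_log_rpow_le_mul_log_div_log_log {α c : ℝ} (hα : α < 1) (hc : 0 < c) :
    ∀ᶠ Q in atTop, log Q ^ α ≤ c * (log Q / log (log Q)) := by
  filter_upwards [tendsto_log_atTop.eventually
    (((isLittleO_rpow_mul_log_atTop hα).bound hc).and (eventually_gt_atTop 1))]
    with Q ⟨hbound, hQ⟩
  have hlog := log_pos hQ
  rw [norm_of_nonneg (by positivity), norm_of_nonneg (by positivity)] at hbound
  rw [mul_div_assoc', le_div_iff₀ hlog]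
  exact hbound

theorem card_filter_divisors_le_exp_binEntropy {n : ℕ} (hn : Squarefree n) {Q y z δ : ℝ}
    (hδ₀ : 0 < δ) (hδ₁ : δ ≤ 1 / 2) (hy : 1 < y) (hnQ : n ≤ Q) (hz : 1 ≤ z) (hzQ : z ≤ Q ^ δ) :
    (#{d ∈ n.divisors | (d : ℕ) ≤ z} : ℝ) ≤ exp (y * log 2 + log Q * binEntropy δ / log y) := by
  set x := δ / (1 - δ)
  have hx₀ : 0 < x := div_pos hδ₀ (by linarith)
  have hx₁ : x ≤ 1 := by rw [div_le_one (by linarith)]; linarith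
  have hn₀ : (0 : ℝ) < n := Nat.cast_pos.2 (Nat.pos_of_ne_zero hn.ne_zero)
  have hQ₀ : 0 < Q := hn₀.trans_le hnQ
  have hlogn : log n ≤ log Q := log_le_log hn₀ hnQ
  have hlogz : log z ≤ δ * log Q := by
    rw [← log_rpow hQ₀]; exact log_le_log (by linarith) hzQ
  have hnum : log n * log (1 + x) - log z * log x ≤ log Q * binEntropy δ := by
    rw [binEntropy_eq_log_one_add_sub_mul_log hδ₀ (by linarith)]
    have := mul_le_mul_of_nonneg_right hlogn (log_nonneg (by linarith : (1 : ℝ) ≤ 1 + x))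
    have := mul_le_mul_of_nonpos_right hlogz (log_nonpos hx₀.le hx₁)
    linarith
  refine (card_filter_divisors_le_exp hn hy hz hx₀ hx₁).trans (exp_le_exp.2 ?_)
  gcongr
  exact (log_pos hy).le

/-- For every δ with 0 < δ ≤ 1/2 and every η > 0 there exists Q₀ such that for all
real Q ≥ Q₀, every squarefree positive integer n ≤ Q and every real z with
1 ≤ z ≤ Q^δ, the number τ(n,z) of divisors of n that are at most z satisfies
τ(n,z) ≤ exp((δ·log(1/δ) + (1−δ)·log(1/(1−δ)) + η)·(log Q)/(log log Q)). -/
theorem stmt_8 :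
    ∀ δ : ℝ, 0 < δ → δ ≤ 1 / 2 → ∀ η : ℝ, 0 < η → ∃ Q₀ : ℝ, ∀ Q : ℝ, Q₀ ≤ Q →
      ∀ n : ℕ, 0 < n → Squarefree n → (n : ℝ) ≤ Q →
        ∀ z : ℝ, 1 ≤ z → z ≤ Q ^ δ →
        ((n.divisors.filter (fun d : ℕ => (d : ℝ) ≤ z)).card : ℝ) ≤
          Real.exp ((δ * Real.log (1 / δ) + (1 - δ) * Real.log (1 / (1 - δ)) + η) *
            (Real.log Q / Real.log (Real.log Q))) := by
  intro δ hδ₀ hδ₁ η hη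
  set ε := η / 2
  have hε : 0 < ε := half_pos hη
  set α := 1 / (1 + ε)
  have hα₀ : 0 < α := by positivity
  have hα₁ : α < 1 := by rw [div_lt_one (by positivity)]; linarith
  obtain ⟨Q₀, hQ₀⟩ := eventually_atTop.1 ((eventually_log_rpow_le_mul_log_div_log_log hα₁
    hε).and (tendsto_log_atTop.eventually_gt_atTop 1))
  refine ⟨Q₀, fun Q hQ n _ hsq hnQ z hz₁ hzQ => ?_⟩
  obtain ⟨hy, hlogQ⟩ := hQ₀ Q hQ
  set L := log Q / log (log Q)
  have hL : 0 < L := div_pos (by linarith) (log_pos hlogQ)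
  have hH : δ * log (1 / δ) + (1 - δ) * log (1 / (1 - δ)) = binEntropy δ := by
    simp only [one_div]; rfl
  have hH₁ : binEntropy δ ≤ 1 := binEntropy_le_log_two.trans (log_two_lt_d9.le.trans (by norm_num))
  refine (card_filter_divisors_le_exp_binEntropy hsq hδ₀ hδ₁ (one_lt_rpow hlogQ hα₀) hnQ hz₁
    hzQ).trans (exp_le_exp.2 ?_)
  have hsmall : log Q ^ α * log 2 ≤ ε * L :=
    (mul_le_of_le_one_right (by positivity) (log_two_lt_d9.le.trans (by norm_num))).trans hy
  have hlarge : log Q * binEntropy δ / log (log Q ^ α) = (1 + ε) * binEntropy δ * L := by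
    have := (log_pos hlogQ).ne'
    rw [log_rpow (by linarith)]
    simp only [L, α]
    field_simp
  have hεL := mul_le_mul_of_nonneg_left hH₁ (mul_nonneg hε.le hL.le)
  rw [hH, hlarge, show η = 2 * ε by ring]
  linarith
end

section
/- For every δ > 0 and every η > 0 there exists Q₀ such that for all real Q ≥ Q₀, every positive integer n with n ≤ Q, and every real z with 1 ≤ z ≤ Q^δ, the number of divisors of n that are at most z satisfies τ(n, z) ≤ exp((δ'·log(1/δ') + (1−δ')·log(1/(1−δ')) + η)·(log Q)/(log log Q)), where δ' = min(δ, 1/2). -/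
/-!
Put `L = log Q`, `u = log L` and `Y = ⌊L / u³⌋`, and write each divisor of `n` as the product of
a `Y`-smooth divisor and a `Y`-rough divisor. Every prime exponent of `n` is at most `log₂ n`,
so `n` has at most `(log₂ n + 1) ^ Y = exp (O (L / u²))` smooth divisors. A rough divisor
`t ≤ z ≤ Q ^ δ` has `Ω t ≤ δ K` with `K = L / log (Y + 1) ≈ L / u`, and its prime factors form a
sub-multiset of the at most `K` rough prime factors of `n`. Hence there are at most
`∑_{i ≤ δ K} C(K, i)` such `t`, and each binomial coefficient is at most
`exp (K · binEntropy (min δ ½))`.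
-/

open Finset Real Filter Topology
open scoped ArithmeticFunction.Omega

namespace Nat

theorem exists_smooth_mul_rough {n : ℕ} (hn : n ≠ 0) (Y : ℕ) :
    ∃ S R, S * R = n ∧ (∀ p ∈ S.primeFactors, p ≤ Y) ∧ ∀ p ∈ R.primeFactors, Y < p := by
  classical
  have hsupp (q : ℕ → Prop) [DecidablePred q] {p : ℕ}
      (hp : p ∈ ((n.factorization.filter q).prod (· ^ ·)).primeFactors) : q p := by
    have hprime : ∀ p ∈ (n.factorization.filter q).support, p.Prime := fun p hp => by
      rw [Finsupp.support_filter, mem_filter, support_factorization] at hp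
      exact prime_of_mem_primeFactors hp.1
    rw [← support_factorization, prod_pow_factorization_eq_self hprime, Finsupp.support_filter,
      mem_filter] at hp
    exact hp.2
  exact ⟨_, _, by rw [Finsupp.prod_filter_mul_prod_filter_not, prod_factorization_pow_eq_self hn],
    fun p hp => hsupp (· ≤ Y) hp, fun p hp => not_le.mp (hsupp (¬ · ≤ Y) hp)⟩

theorem factorization_le_log_two (n p : ℕ) : n.factorization p ≤ log 2 n := by
  by_cases hp : p.Prime
  · rw [factorization_def n hp]
    exact (padicValNat_le_nat_log n).trans (log_anti_left one_lt_two hp.two_le)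
  · simp [factorization_eq_zero_of_not_prime n hp]

theorem card_divisors_le_of_forall_le {S Y : ℕ} (hS : S ≠ 0) (h : ∀ p ∈ S.primeFactors, p ≤ Y) :
    #S.divisors ≤ (log 2 S + 1) ^ Y := by
  have hsub : S.primeFactors ⊆ Ioc 0 Y := fun p hp =>
    mem_Ioc.mpr ⟨(prime_of_mem_primeFactors hp).pos, h p hp⟩
  calc #S.divisors = ∏ p ∈ S.primeFactors, (S.factorization p + 1) := card_divisors hS
    _ ≤ ∏ _p ∈ S.primeFactors, (log 2 S + 1) :=
      prod_le_prod' fun p _ => Nat.add_le_add_right (factorization_le_log_two S p) 1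
    _ = (log 2 S + 1) ^ #S.primeFactors := prod_const _
    _ ≤ (log 2 S + 1) ^ Y := by
      simpa using Nat.pow_le_pow_right (succ_pos _) (card_le_card hsub)

theorem pow_cardFactors_le_of_forall_lt {t Y : ℕ} (ht : t ≠ 0)
    (h : ∀ p ∈ t.primeFactors, Y < p) : (Y + 1) ^ Ω t ≤ t := by
  have := List.pow_card_le_prod t.primeFactorsList (Y + 1) fun p hp =>
    h p <| mem_primeFactors_of_ne_zero ht |>.mpr
      ⟨prime_of_mem_primeFactorsList hp, dvd_of_mem_primeFactorsList hp⟩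
  rwa [prod_primeFactorsList ht, ← ArithmeticFunction.cardFactors_apply] at this

theorem card_filter_divisors_le_sum_choose (m : ℕ) (P : ℕ → Prop) [DecidablePred P] :
    #{t ∈ m.divisors | P (Ω t)} ≤ ∑ i ∈ range (Ω m + 1) with P i, (Ω m).choose i := by
  classical
  let factors (t : ℕ) : Multiset ℕ := t.primeFactorsList
  calc #{t ∈ m.divisors | P (Ω t)}
      ≤ #((range (Ω m + 1)).filter P |>.biUnion
          fun i => (Multiset.powersetCard i (factors m)).toFinset) := by
        refine card_le_card_of_injOn factors (fun t ht => ?_) (fun t ht s hs hts => ?_)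
        · obtain ⟨htm, hP⟩ := mem_filter.mp ht
          obtain ⟨htm, hm⟩ := mem_divisors.mp htm
          have hle : factors t ≤ factors m :=
            Multiset.coe_le.mpr (primeFactorsList_sublist_of_dvd htm hm).subperm
          have hcard : Ω t ≤ Ω m := by
            simpa [factors, ArithmeticFunction.cardFactors_apply] using Multiset.card_le_card hle
          refine mem_biUnion.mpr
            ⟨Ω t, mem_filter.mpr ⟨mem_range.mpr (lt_succ_of_le hcard), hP⟩, ?_⟩
          exact Multiset.mem_toFinset.mpr (Multiset.mem_powersetCard.mpr
            ⟨hle, by simp [factors, ArithmeticFunction.cardFactors_apply]⟩)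
        · have := congrArg Multiset.prod hts
          simp only [factors, Multiset.prod_coe] at this
          rwa [prod_primeFactorsList (pos_of_mem_divisors (mem_filter.mp ht).1).ne',
            prod_primeFactorsList (pos_of_mem_divisors (mem_filter.mp hs).1).ne'] at this
    _ ≤ ∑ i ∈ range (Ω m + 1) with P i, #(Multiset.powersetCard i (factors m)).toFinset :=
      card_biUnion_le
    _ ≤ ∑ i ∈ range (Ω m + 1) with P i, (Ω m).choose i :=
      sum_le_sum fun i _ => (Multiset.toFinset_card_le _).trans
        (by simp [factors, ArithmeticFunction.cardFactors_apply])

theorem card_filter_divisors_mul_le (S R : ℕ) (z : ℝ) :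
    #((S * R).divisors.filter fun d : ℕ => (d : ℝ) ≤ z) ≤
      #S.divisors * #(R.divisors.filter fun t : ℕ => (t : ℝ) ≤ z) := by
  refine (card_le_card fun d hd => ?_).trans card_mul_le
  obtain ⟨hdiv, hdz⟩ := mem_filter.mp hd
  rw [divisors_mul] at hdiv
  obtain ⟨s, hs, t, ht, rfl⟩ := mem_mul.mp hdiv
  refine mem_mul.mpr ⟨s, hs, t, mem_filter.mpr ⟨ht, le_trans ?_ hdz⟩, rfl⟩
  exact_mod_cast Nat.le_mul_of_pos_left t (pos_of_mem_divisors hs)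

end Nat

theorem pow_mul_pow_mul_choose_le_one (N i : ℕ) {p : ℝ} (hp0 : 0 ≤ p) (hp1 : p ≤ 1) :
    p ^ i * (1 - p) ^ (N - i) * N.choose i ≤ 1 := by
  rcases lt_or_ge N i with hNi | hiN
  · simp [Nat.choose_eq_zero_of_lt hNi]
  have hq : 0 ≤ 1 - p := by linarith
  calc p ^ i * (1 - p) ^ (N - i) * N.choose i
      ≤ ∑ k ∈ range (N + 1), p ^ k * (1 - p) ^ (N - k) * N.choose k :=
        single_le_sum (f := fun k => p ^ k * (1 - p) ^ (N - k) * (N.choose k : ℝ))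
          (fun k _ => by positivity) (mem_range.mpr (Nat.lt_succ_of_le hiN))
    _ = 1 := by rw [← add_pow, add_sub_cancel, one_pow]

theorem choose_le_exp_mul_binEntropy {N i : ℕ} {δ K : ℝ} (hδ : 0 < δ) (hN : N ≤ K)
    (hi : i ≤ δ * K) : (N.choose i : ℝ) ≤ exp (K * binEntropy (min δ 2⁻¹)) := by
  set p := min δ 2⁻¹
  have hp0 : 0 < p := lt_min hδ (by norm_num)
  have hp2 : p ≤ 2⁻¹ := min_le_right _ _
  have hq0 : 0 < 1 - p := by linarith
  rcases lt_or_ge N i with hNi | hiN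
  · simpa [Nat.choose_eq_zero_of_lt hNi] using (exp_pos _).le
  -- The exponent `i log p⁻¹ + (K - i) log (1 - p)⁻¹` is affine in `i`, with a slope of the sign
  -- of `1 - 2p`; when `p < 2⁻¹` it is evaluated at `i ≤ p K`.
  have hslope : ((i : ℝ) - p * K) * (log p⁻¹ - log (1 - p)⁻¹) ≤ 0 := by
    rcases le_or_gt δ 2⁻¹ with h | h
    · have hpδ : p = δ := min_eq_left h
      refine mul_nonpos_of_nonpos_of_nonneg (by rw [hpδ]; linarith) (sub_nonneg.mpr ?_)
      exact log_le_log (by positivity) (inv_anti₀ hp0 (by linarith))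
    · have hp : p = 2⁻¹ := min_eq_right h.le
      norm_num [hp]
  have hlog : 0 ≤ log (1 - p)⁻¹ := log_nonneg (one_le_inv₀ hq0 |>.mpr (by linarith))
  have hchoose : (N.choose i : ℝ) ≤ (p⁻¹) ^ i * ((1 - p)⁻¹) ^ (N - i) := by
    rw [inv_pow, inv_pow, ← mul_inv, ← one_div, le_div_iff₀ (by positivity), mul_comm]
    exact pow_mul_pow_mul_choose_le_one N i hp0.le (by linarith)
  calc (N.choose i : ℝ) ≤ (p⁻¹) ^ i * ((1 - p)⁻¹) ^ (N - i) := hchoose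
    _ = exp (i * log p⁻¹ + (N - i : ℕ) * log (1 - p)⁻¹) := by
      rw [exp_add, ← log_pow, ← log_pow, exp_log (by positivity), exp_log (by positivity)]
    _ ≤ exp (K * binEntropy p + ((i : ℝ) - p * K) * (log p⁻¹ - log (1 - p)⁻¹)) := by
      rw [Nat.cast_sub hiN, binEntropy]
      exact exp_le_exp.mpr (by linarith [mul_le_mul_of_nonneg_right hN hlog])
    _ ≤ exp (K * binEntropy p) := by gcongr; linarith

theorem card_filter_divisors_le_mul_exp_binEntropy {R Y : ℕ} {Q δ z : ℝ} (hY : 0 < Y)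
    (hδ : 0 < δ) (hR : R ≠ 0) (hrough : ∀ p ∈ R.primeFactors, Y < p) (hRQ : (R : ℝ) ≤ Q)
    (hzQ : z ≤ Q ^ δ) :
    (#(R.divisors.filter fun t : ℕ => (t : ℝ) ≤ z) : ℝ) ≤
      (log Q / log (Y + 1) + 1) * exp (log Q / log (Y + 1) * binEntropy (min δ 2⁻¹)) := by
  set c := log ((Y : ℝ) + 1)
  set K := log Q / c
  have hc : 0 < c := log_pos (by norm_cast; omega)
  have hQ : 0 < Q := lt_of_lt_of_le (by exact_mod_cast Nat.pos_of_ne_zero hR) hRQ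
  have hΩ (t : ℕ) (ht : t ∈ R.divisors) : (Ω t : ℝ) * c ≤ log t := by
    have := Nat.pow_cardFactors_le_of_forall_lt (Nat.pos_of_mem_divisors ht).ne'
      fun p hp => hrough p (Nat.primeFactors_mono (Nat.dvd_of_mem_divisors ht) hR hp)
    rw [← log_pow]
    exact log_le_log (by positivity) (by exact_mod_cast this)
  have hsub : (R.divisors.filter fun t : ℕ => (t : ℝ) ≤ z) ⊆
      R.divisors.filter fun t => (Ω t : ℝ) ≤ δ * K := by
    intro t ht
    obtain ⟨htR, htz⟩ := mem_filter.mp ht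
    have ht0 : (0 : ℝ) < t := by exact_mod_cast Nat.pos_of_mem_divisors htR
    refine mem_filter.mpr ⟨htR, ?_⟩
    rw [mul_div_assoc', le_div_iff₀ hc]
    calc (Ω t : ℝ) * c ≤ log t := hΩ t htR
      _ ≤ log z := log_le_log ht0 htz
      _ ≤ log (Q ^ δ) := log_le_log (ht0.trans_le htz) hzQ
      _ = δ * log Q := log_rpow hQ δ
  have hΩR : (Ω R : ℝ) ≤ K := by
    rw [le_div_iff₀ hc]
    exact (hΩ R (Nat.mem_divisors_self R hR)).trans
      (log_le_log (by exact_mod_cast Nat.pos_of_ne_zero hR) hRQ)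
  calc (#(R.divisors.filter fun t : ℕ => (t : ℝ) ≤ z) : ℝ)
      ≤ #(R.divisors.filter fun t => (Ω t : ℝ) ≤ δ * K) := by exact_mod_cast card_le_card hsub
    _ ≤ ∑ i ∈ (range (Ω R + 1)).filter (fun i : ℕ => (i : ℝ) ≤ δ * K), ((Ω R).choose i : ℝ) := by
      exact_mod_cast Nat.card_filter_divisors_le_sum_choose R fun i => (i : ℝ) ≤ δ * K
    _ ≤ ∑ _i ∈ range (Ω R + 1), exp (K * binEntropy (min δ 2⁻¹)) :=
      (sum_le_sum fun i hi => choose_le_exp_mul_binEntropy hδ hΩR (mem_filter.mp hi).2).trans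
        (sum_le_sum_of_subset_of_nonneg (filter_subset _ _) fun _ _ _ => (exp_pos _).le)
    _ = (Ω R + 1) * exp (K * binEntropy (min δ 2⁻¹)) := by simp
    _ ≤ (K + 1) * exp (K * binEntropy (min δ 2⁻¹)) := by gcongr

theorem card_filter_divisors_le_pow_mul_exp_binEntropy {n Y : ℕ} {Q δ z : ℝ} (hn : n ≠ 0)
    (hY : 0 < Y) (hδ : 0 < δ) (hnQ : (n : ℝ) ≤ Q) (hzQ : z ≤ Q ^ δ) :
    (#(n.divisors.filter fun d : ℕ => (d : ℝ) ≤ z) : ℝ) ≤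
      (log Q / log 2 + 1) ^ Y *
        ((log Q / log (Y + 1) + 1) * exp (log Q / log (Y + 1) * binEntropy (min δ 2⁻¹))) := by
  obtain ⟨S, R, rfl, hS, hR⟩ := Nat.exists_smooth_mul_rough hn Y
  have hS0 : S ≠ 0 := left_ne_zero_of_mul hn
  have hR0 : R ≠ 0 := right_ne_zero_of_mul hn
  have hSQ : (S : ℝ) ≤ Q :=
    le_trans (by exact_mod_cast Nat.le_mul_of_pos_right S (Nat.pos_of_ne_zero hR0)) hnQ
  have hRQ : (R : ℝ) ≤ Q :=
    le_trans (by exact_mod_cast Nat.le_mul_of_pos_left R (Nat.pos_of_ne_zero hS0)) hnQ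
  have hsmooth : (#S.divisors : ℝ) ≤ (log Q / log 2 + 1) ^ Y := by
    calc (#S.divisors : ℝ) ≤ ((Nat.log 2 S : ℝ) + 1) ^ Y := by
          exact_mod_cast Nat.card_divisors_le_of_forall_le hS0 hS
      _ ≤ (log Q / log 2 + 1) ^ Y := by
          gcongr
          calc (Nat.log 2 S : ℝ) ≤ logb 2 S := by exact_mod_cast natLog_le_logb S 2
            _ ≤ logb 2 Q :=
              logb_le_logb_of_le one_lt_two (by exact_mod_cast Nat.pos_of_ne_zero hS0) hSQ
  calc (#((S * R).divisors.filter fun d : ℕ => (d : ℝ) ≤ z) : ℝ)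
      ≤ #S.divisors * #(R.divisors.filter fun t : ℕ => (t : ℝ) ≤ z) := by
        exact_mod_cast Nat.card_filter_divisors_mul_le S R z
    _ ≤ _ := mul_le_mul hsmooth
        (card_filter_divisors_le_mul_exp_binEntropy hY hδ hR0 hR hRQ hzQ)
        (by positivity) ((Nat.cast_nonneg _).trans hsmooth)

/-- With `L = exp u`, `Y ≈ L / u³` and `K = L / log (Y + 1)`, the three summands are the relative
losses, against `L / u`, of the smooth divisors (`Y log (L / log 2 + 1) ≤ 2 L / u²`), of the factor
`K + 1 ≤ exp (2 u)`, and of `log (Y + 1) ≥ u - 3 log u`. -/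
noncomputable def errorTerm (u : ℝ) : ℝ := 2 / u + 2 * u ^ 2 / exp u + 3 * log u / (u - 3 * log u)

theorem tendsto_errorTerm_atTop : Tendsto errorTerm atTop (𝓝 0) := by
  have hlog : Tendsto (fun u => log u / u) atTop (𝓝 0) :=
    isLittleO_log_id_atTop.tendsto_div_nhds_zero
  have h1 : Tendsto (fun u : ℝ => 2 / u) atTop (𝓝 0) := tendsto_const_nhds.div_atTop tendsto_id
  have h2 : Tendsto (fun u : ℝ => 2 * u ^ 2 / exp u) atTop (𝓝 0) := by
    simpa [div_eq_mul_inv, exp_neg, mul_assoc] using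
      (tendsto_pow_mul_exp_neg_atTop_nhds_zero 2).const_mul 2
  have h3 : Tendsto (fun u => 3 * log u / (u - 3 * log u)) atTop (𝓝 0) := by
    have := (hlog.const_mul 3).div (tendsto_const_nhds.sub (hlog.const_mul 3))
      (by norm_num : (1 : ℝ) - 3 * 0 ≠ 0)
    rw [mul_zero, zero_div] at this
    refine this.congr' ?_
    filter_upwards [eventually_gt_atTop 0] with u hu
    rw [Pi.div_apply, mul_div_assoc', one_sub_div hu.ne', div_div_div_cancel_right₀ hu.ne']
  have := (h1.add h2).add h3
  rw [add_zero, add_zero] at this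
  exact this

theorem pow_mul_exp_le_exp_of_errorTerm_le {u η H : ℝ} {Y : ℕ} (hu : 2 ≤ u)
    (hv : 3 * log u < u) (hY : (Y : ℝ) ≤ exp u / u ^ 3) (hY' : exp u / u ^ 3 ≤ Y + 1)
    (hY2 : 2 ≤ Y) (herr : errorTerm u ≤ η) (hH0 : 0 ≤ H) (hH1 : H ≤ 1) :
    (exp u / log 2 + 1) ^ Y * ((exp u / log (Y + 1) + 1) * exp (exp u / log (Y + 1) * H)) ≤
      exp ((H + η) * (exp u / u)) := by
  set L := exp u
  set v := log u
  set c := log ((Y : ℝ) + 1)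
  have hL : 0 < L := exp_pos u
  have hu0 : 0 < u := by linarith
  have hv0 : 0 ≤ v := log_nonneg (by linarith)
  have huv : 0 < u - 3 * v := by linarith
  have hLu : exp 2 ≤ L := exp_le_exp.mpr hu
  have hc1 : 1 ≤ c := by
    rw [le_log_iff_exp_le (by positivity)]
    have : (3 : ℝ) ≤ Y + 1 := by exact_mod_cast Nat.succ_le_succ hY2
    linarith [exp_one_lt_d9]
  have hcv : u - 3 * v ≤ c := by
    have := log_le_log (by positivity) hY'
    rwa [log_div hL.ne' (by positivity), log_pow, log_exp, Nat.cast_ofNat] at this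
  have hsmooth : (L / log 2 + 1) ^ Y ≤ exp (2 * L / u ^ 2) := by
    have hlog : log (L / log 2 + 1) ≤ 2 * u := by
      have h3L : L / log 2 + 1 ≤ 3 * L := by
        have : L / log 2 ≤ 2 * L := by
          rw [div_le_iff₀ (log_pos one_lt_two)]; nlinarith [log_two_gt_d9]
        linarith [add_one_le_exp 2]
      calc log (L / log 2 + 1) ≤ log (3 * L) := log_le_log (by positivity) h3L
        _ = log 3 + u := by rw [log_mul (by norm_num) hL.ne', log_exp]
        _ ≤ 2 * u := by linarith [log_le_sub_one_of_pos (by norm_num : (0 : ℝ) < 3)]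
    calc (L / log 2 + 1) ^ Y = exp (Y * log (L / log 2 + 1)) := by
          rw [← log_pow, exp_log (by positivity)]
      _ ≤ exp (L / u ^ 3 * (2 * u)) := by
          gcongr
          exact log_nonneg (by linarith [div_nonneg hL.le (log_pos one_lt_two).le])
      _ = exp (2 * L / u ^ 2) := by congr 1; field_simp
  have hK : L / c + 1 ≤ exp (2 * u) := by
    have : L / c ≤ L := div_le_self hL.le hc1
    rw [show 2 * u = u + u by ring, exp_add]
    nlinarith [add_one_le_exp 2]
  have hexponent : 2 * L / u ^ 2 + 2 * u + L / (u - 3 * v) * H ≤ (H + η) * (L / u) := by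
    have e1 : 2 * L / u ^ 2 = L / u * (2 / u) := by field_simp
    have e2 : 2 * u = L / u * (2 * u ^ 2 / L) := by field_simp
    have e3 : L / (u - 3 * v) = L / u + L / u * (3 * v / (u - 3 * v)) := by field_simp; ring
    have hfrac : 0 ≤ L / u * (3 * v / (u - 3 * v)) := by positivity
    rw [errorTerm] at herr
    rw [e1, e2, e3]
    linarith [mul_le_mul_of_nonneg_left herr (by positivity : 0 ≤ L / u),
      mul_le_of_le_one_right hfrac hH1]
  calc (L / log 2 + 1) ^ Y * ((L / c + 1) * exp (L / c * H))
      ≤ exp (2 * L / u ^ 2) * (exp (2 * u) * exp (L / (u - 3 * v) * H)) := by gcongr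
    _ = exp (2 * L / u ^ 2 + 2 * u + L / (u - 3 * v) * H) := by rw [exp_add, exp_add, mul_assoc]
    _ ≤ exp ((H + η) * (L / u)) := exp_le_exp.mpr hexponent

theorem eventually_exists_pow_mul_exp_le_exp {η : ℝ} (hη : 0 < η) :
    ∀ᶠ L in atTop, ∃ Y : ℕ, 0 < Y ∧ ∀ H, 0 ≤ H → H ≤ 1 →
      (L / log 2 + 1) ^ Y * ((L / log (Y + 1) + 1) * exp (L / log (Y + 1) * H)) ≤
        exp ((H + η) * (L / log L)) := by
  have hu : ∀ᶠ u in atTop, ∃ Y : ℕ, 0 < Y ∧ ∀ H, 0 ≤ H → H ≤ 1 →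
      (exp u / log 2 + 1) ^ Y * ((exp u / log (Y + 1) + 1) * exp (exp u / log (Y + 1) * H)) ≤
        exp ((H + η) * (exp u / u)) := by
    filter_upwards [eventually_ge_atTop 2, (tendsto_exp_div_pow_atTop 3).eventually_ge_atTop 3,
      isLittleO_log_id_atTop.tendsto_div_nhds_zero.eventually
        (gt_mem_nhds (by norm_num : (0 : ℝ) < 3⁻¹)),
      tendsto_errorTerm_atTop.eventually (ge_mem_nhds hη)] with u hu hexp hlog herr
    have hY2 : 2 ≤ ⌊exp u / u ^ 3⌋₊ := Nat.le_floor (by push_cast; linarith)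
    have hv : 3 * log u < u := by
      rw [id, div_lt_iff₀ (by linarith)] at hlog
      linarith
    exact ⟨_, by omega, fun H hH0 hH1 => pow_mul_exp_le_exp_of_errorTerm_le hu hv
      (Nat.floor_le (by positivity)) (Nat.lt_floor_add_one _).le hY2 herr hH0 hH1⟩
  filter_upwards [tendsto_log_atTop.eventually hu, eventually_gt_atTop 0] with L hL hL0
  rwa [exp_log hL0] at hL

/-- For every δ > 0 and every η > 0 there exists Q₀ such that for all real Q ≥ Q₀,
every positive integer n ≤ Q and every real z with 1 ≤ z ≤ Q^δ, the number τ(n,z)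
of divisors of n that are at most z satisfies
τ(n,z) ≤ exp((δ'·log(1/δ') + (1−δ')·log(1/(1−δ')) + η)·(log Q)/(log log Q)),
where δ' = min(δ, 1/2). -/
theorem stmt_9 :
    ∀ δ : ℝ, 0 < δ → ∀ η : ℝ, 0 < η → ∃ Q₀ : ℝ, ∀ Q : ℝ, Q₀ ≤ Q →
      ∀ n : ℕ, 0 < n → (n : ℝ) ≤ Q →
        ∀ z : ℝ, 1 ≤ z → z ≤ Q ^ δ →
        ((n.divisors.filter (fun d : ℕ => (d : ℝ) ≤ z)).card : ℝ) ≤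
          Real.exp ((min δ (1 / 2) * Real.log (1 / min δ (1 / 2)) +
              (1 - min δ (1 / 2)) * Real.log (1 / (1 - min δ (1 / 2))) + η) *
            (Real.log Q / Real.log (Real.log Q))) := by
  intro δ hδ η hη
  obtain ⟨Q₀, hQ₀⟩ :=
    eventually_atTop.mp (tendsto_log_atTop.eventually (eventually_exists_pow_mul_exp_le_exp hη))
  refine ⟨Q₀, fun Q hQ n hn hnQ z _ hzQ => ?_⟩
  obtain ⟨Y, hY, hbound⟩ := hQ₀ Q hQ
  have hp0 : 0 ≤ min δ 2⁻¹ := le_min hδ.le (by norm_num)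
  have hp1 : min δ 2⁻¹ ≤ 1 := (min_le_right _ _).trans (by norm_num)
  have hH1 : binEntropy (min δ 2⁻¹) ≤ 1 :=
    binEntropy_le_log_two.trans (by linarith [log_two_lt_d9])
  calc _ ≤ _ := card_filter_divisors_le_pow_mul_exp_binEntropy hn.ne' hY hδ hnQ hzQ
    _ ≤ _ := hbound _ (binEntropy_nonneg hp0 hp1) hH1
    _ = _ := by simp only [binEntropy, one_div]
end

section
/- For every integer n > 1, one has log τ(n²) / log τ(n) ≤ log 3 / log 2; equivalently, (log 2)·log τ(n²) ≤ (log 3)·log τ(n). -/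
open Real Finset

lemma key_ineq (a : ℕ) (ha : 1 ≤ a) :
    Real.log (2 * (a : ℝ) + 1) * Real.log 2 ≤ Real.log 3 * Real.log ((a : ℝ) + 1) := by
  rcases eq_or_lt_of_le ha with h | h
  · rw [← h]; norm_num [mul_comm]
  · have ha2 : (2 : ℝ) ≤ (a : ℝ) := by exact_mod_cast h
    have h1 : 2 * Real.log (2 * (a : ℝ) + 1) ≤ 3 * Real.log ((a : ℝ) + 1) := by
      have hsq : (2 * (a : ℝ) + 1) ^ (2 : ℕ) ≤ ((a : ℝ) + 1) ^ (3 : ℕ) := by nlinarith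
      have := Real.log_le_log (by positivity) hsq
      rwa [Real.log_pow, Real.log_pow] at this
    have h2 : 3 * Real.log 2 ≤ 2 * Real.log 3 := by
      have h89 : ((2 : ℝ) ^ (3 : ℕ)) ≤ (3 : ℝ) ^ (2 : ℕ) := by norm_num
      have := Real.log_le_log (by norm_num) h89
      rwa [Real.log_pow, Real.log_pow] at this
    have hA : 0 ≤ Real.log (2 * (a : ℝ) + 1) := Real.log_nonneg (by linarith)
    have hB : 0 ≤ Real.log ((a : ℝ) + 1) := Real.log_nonneg (by linarith)
    have hL2 : 0 ≤ Real.log 2 := Real.log_nonneg (by norm_num)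
    have hL3 : 0 ≤ Real.log 3 := Real.log_nonneg (by norm_num)
    nlinarith [mul_nonneg hB hL2, mul_nonneg hA hL3]

/-- For every integer n > 1, log τ(n²) / log τ(n) ≤ log 3 / log 2, where τ is the
number-of-divisors function. -/
theorem stmt_10 (n : ℕ) (hn : 1 < n) :
    Real.log ((n ^ 2).divisors.card) / Real.log (n.divisors.card) ≤
      Real.log 3 / Real.log 2 := by
  have hn0 : n ≠ 0 := by omega
  set f := n.factorization with hf
  set S := n.primeFactors with hS
  have hmem : ∀ p ∈ S, 1 ≤ f p := by
    intro p hp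
    exact (Nat.Prime.factorization_pos_of_dvd (Nat.prime_of_mem_primeFactors hp) hn0
      (Nat.dvd_of_mem_primeFactors hp))
  have hτn : (n.divisors.card : ℝ) = ∏ p ∈ S, ((f p : ℝ) + 1) := by
    rw [Nat.card_divisors hn0]
    push_cast
    rfl
  have hτn2 : ((n ^ 2).divisors.card : ℝ) = ∏ p ∈ S, (2 * (f p : ℝ) + 1) := by
    rw [Nat.card_divisors (pow_ne_zero 2 hn0), Nat.primeFactors_pow n (two_ne_zero)]
    push_cast
    refine Finset.prod_congr rfl fun p hp => ?_
    rw [Nat.factorization_pow]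
    simp [hf, two_mul, mul_comm]
  have hlog1 : Real.log (n.divisors.card) = ∑ p ∈ S, Real.log ((f p : ℝ) + 1) := by
    rw [hτn, Real.log_prod]
    intro p hp; have := hmem p hp; positivity
  have hlog2 : Real.log ((n ^ 2).divisors.card) = ∑ p ∈ S, Real.log (2 * (f p : ℝ) + 1) := by
    rw [hτn2, Real.log_prod]
    intro p hp; have := hmem p hp; positivity
  have hSne : S.Nonempty := (Nat.nonempty_primeFactors).2 hn
  have hpos : 0 < Real.log (n.divisors.card) := by
    rw [hlog1]
    apply Finset.sum_pos _ hSne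
    intro p hp
    have := hmem p hp
    apply Real.log_pos
    have : (1 : ℝ) ≤ (f p : ℝ) := by exact_mod_cast this
    linarith
  rw [div_le_div_iff₀ hpos (Real.log_pos (by norm_num))]
  rw [hlog1, hlog2, Finset.sum_mul, Finset.mul_sum]
  exact Finset.sum_le_sum fun p hp => key_ineq (f p) (hmem p hp)
end

section
/- For every real number β ≥ 1, one has (log 2)·log(1 + 2β) ≤ (log 3)·log(1 + β). -/
/-- For every real β ≥ 1, (log 2)·log(1 + 2β) ≤ (log 3)·log(1 + β). -/
theorem stmt_11 (β : ℝ) (hβ : 1 ≤ β) :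
    Real.log 2 * Real.log (1 + 2 * β) ≤ Real.log 3 * Real.log (1 + β) := by
  have hb0 : (0:ℝ) < 1 + β := by linarith
  have hq : (0:ℝ) < (2 + 4*β)/(3 + 3*β) := by positivity
  -- log x ≤ x - 1 bounds
  have hA : Real.log ((2 + 4*β)/(3 + 3*β)) ≤ (β - 1)/(3*(1+β)) := by
    have h1 := Real.log_le_sub_one_of_pos hq
    have h2 : (2 + 4*β)/(3 + 3*β) - 1 = (β - 1)/(3*(1+β)) := by
      field_simp; ring
    linarith [h2 ▸ h1]
  have hB : (β - 1)/(1+β) ≤ Real.log ((1+β)/2) := by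
    have h1 := Real.log_le_sub_one_of_pos (show (0:ℝ) < 2/(1+β) by positivity)
    have h2 : Real.log (2/(1+β)) = - Real.log ((1+β)/2) := by
      rw [Real.log_div (by norm_num) (by linarith), Real.log_div (by linarith) (by norm_num)]
      ring
    have h3 : 2/(1+β) - 1 = -((β - 1)/(1+β)) := by field_simp; ring
    rw [h2, h3] at h1
    linarith
  -- decompositions
  have e1 : Real.log (1 + 2*β)
      = Real.log (3/2) + Real.log (1+β) + Real.log ((2 + 4*β)/(3 + 3*β)) := by
    have : (1:ℝ) + 2*β = (3/2) * (1+β) * ((2 + 4*β)/(3 + 3*β)) := by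
      field_simp; ring
    rw [this, Real.log_mul (by positivity) (by positivity),
      Real.log_mul (by norm_num) (by linarith)]
  have e2 : Real.log (1+β) = Real.log 2 + Real.log ((1+β)/2) := by
    have h : (1:ℝ) + β = 2 * ((1+β)/2) := by ring
    conv_lhs => rw [h]
    rw [Real.log_mul (by norm_num) (by positivity)]
  have e3 : Real.log 3 = Real.log 2 + Real.log (3/2) := by
    rw [Real.log_div (by norm_num) (by norm_num)]; ring
  have hl2 : 0 < Real.log 2 := Real.log_pos (by norm_num)
  have hl32 : 0 < Real.log (3/2) := Real.log_pos (by norm_num)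
  have hkey : Real.log 2 ≤ 3 * Real.log (3/2) := by
    have : Real.log 2 ≤ Real.log ((3/2)^3) := by
      apply Real.log_le_log (by norm_num); norm_num
    rwa [Real.log_pow] at this
    
  -- combine
  have hcomb : Real.log 2 * ((β - 1)/(3*(1+β))) ≤ Real.log (3/2) * ((β - 1)/(1+β)) := by
    rw [← mul_div_assoc, ← mul_div_assoc, div_le_div_iff₀ (by positivity) (by positivity)]
    nlinarith [mul_le_mul_of_nonneg_right hkey (show (0:ℝ) ≤ (β-1)*(1+β) by nlinarith)]
  rw [e1, e2, e3]
  nlinarith [mul_le_mul_of_nonneg_left hA (le_of_lt hl2),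
    mul_le_mul_of_nonneg_left hB (le_of_lt hl32)]
end

section
/- For every η > 0 there exists Q₀ such that for all real Q ≥ Q₀, all real c, and every positive integer n with n ≤ Q², if τ(n) ≥ exp((2·log 2 − c)·(log Q)/(log log Q)), then every positive integer m with m² dividing n satisfies m ≤ Q^(c/(2·log 2 − log 3) + η). -/
/-!
Write `n = m² k`, so that `τ(n) = ∏ₚ (2 bₚ + cₚ + 1)` with `bₚ = v_p(m)`, `cₚ = v_p(k)`,
and put `x = log Q`. Every factor is at most `4x`, so the primes below `T = x^ρ` (`ρ < 1`)
contribute `exp(O(x^ρ log x))`, negligible against `x / log x`. For `p ≥ T` one has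
`p^δ₂ ≥ 2` and `p^δ₃ ≥ 3` with `δᵢ ≈ (log i + ε) / log x`, and `2b + c + 1 ≤ 3^b 2^c` bounds
the factor by `p^(δ₃ b + δ₂ c)`. Hence `τ(n) ≤ exp(ε x / log x) · m^δ₃ k^δ₂`; comparing with
the assumed lower bound and using `k ≤ Q² / m²` gives
`(2 log 2 - log 3 + ε) log m ≤ (c + 3ε) log Q`.
-/

open Real Finset Filter Asymptotics

lemma two_mul_add_add_one_le_pow_mul_pow {u v : ℝ} (hu : 2 ≤ u) (hv : 3 ≤ v) (b c : ℕ) :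
    (2 * b + c + 1 : ℝ) ≤ v ^ b * u ^ c := by
  have h3 : (2 * b + 1 : ℝ) ≤ 3 ^ b := by
    induction b with
    | zero => norm_num
    | succ b ih =>
      have : (1 : ℝ) ≤ 3 ^ b := one_le_pow₀ (by norm_num)
      push_cast [pow_succ]
      linarith
  have h2 : (c + 1 : ℝ) ≤ 2 ^ c := by exact_mod_cast Nat.lt_two_pow_self
  calc (2 * b + c + 1 : ℝ) ≤ (2 * b + 1) * (c + 1) := by
        nlinarith [(b.cast_nonneg : (0 : ℝ) ≤ b)]
    _ ≤ 3 ^ b * 2 ^ c := by gcongr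
    _ ≤ v ^ b * u ^ c := by gcongr

lemma Nat.prod_rpow_pow_factorization {m : ℕ} (hm : m ≠ 0) {s : Finset ℕ}
    (hs : m.primeFactors ⊆ s) (δ : ℝ) :
    ∏ p ∈ s, ((p : ℝ) ^ δ) ^ m.factorization p = (m : ℝ) ^ δ := by
  have hprod : ∏ p ∈ s, p ^ m.factorization p = m := by
    rw [← prod_subset hs fun p _ hp => by
      simp [Finsupp.notMem_support_iff.1 (m.support_factorization ▸ hp)]]
    exact Nat.prod_factorization_pow_eq_self hm
  simp_rw [rpow_pow_comm (Nat.cast_nonneg _)]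
  rw [finsetProd_rpow _ _ fun p _ => by positivity]
  exact_mod_cast congrArg (fun n : ℕ => (n : ℝ) ^ δ) hprod

theorem Nat.card_divisors_sq_mul_le {m k : ℕ} (hm : m ≠ 0) (hk : k ≠ 0) {T A δ₂ δ₃ : ℝ}
    (hA : 1 ≤ A) (hfac : ∀ p, ((m ^ 2 * k).factorization p + 1 : ℝ) ≤ A)
    (hδ₂ : 0 ≤ δ₂) (hδ₃ : 0 ≤ δ₃)
    (h₂ : ∀ p : ℕ, p.Prime → T ≤ p → 2 ≤ (p : ℝ) ^ δ₂)
    (h₃ : ∀ p : ℕ, p.Prime → T ≤ p → 3 ≤ (p : ℝ) ^ δ₃) :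
    ((m ^ 2 * k).divisors.card : ℝ) ≤ A ^ ⌈T⌉₊ * ((m : ℝ) ^ δ₃ * (k : ℝ) ^ δ₂) := by
  set n := m ^ 2 * k
  have hn : n ≠ 0 := by positivity
  set g : ℕ → ℝ := fun p =>
    ((p : ℝ) ^ δ₃) ^ m.factorization p * ((p : ℝ) ^ δ₂) ^ k.factorization p
  have hfactor : ∀ p ∈ n.primeFactors,
      ((n.factorization p : ℕ) + 1 : ℝ) ≤ (if (p : ℝ) < T then A else 1) * g p := by
    intro p hp
    have hpp := Nat.prime_of_mem_primeFactors hp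
    split_ifs with hpT
    · have hg : 1 ≤ g p := by
        have hp1 : (1 : ℝ) ≤ p := by exact_mod_cast hpp.one_le
        exact one_le_mul_of_one_le_of_one_le (one_le_pow₀ (one_le_rpow hp1 hδ₃))
          (one_le_pow₀ (one_le_rpow hp1 hδ₂))
      nlinarith [hfac p]
    · have hnp : n.factorization p = 2 * m.factorization p + k.factorization p := by
        simp [n, Nat.factorization_mul (pow_ne_zero 2 hm) hk]
      rw [one_mul, hnp]
      push_cast
      exact two_mul_add_add_one_le_pow_mul_pow (h₂ p hpp (not_lt.1 hpT))
        (h₃ p hpp (not_lt.1 hpT)) _ _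
  set S := n.primeFactors.filter fun p : ℕ => (p : ℝ) < T
  have hsmall : #S ≤ ⌈T⌉₊ :=
    (card_le_card fun p hp => mem_range.2 (Nat.lt_ceil.2 (mem_filter.1 hp).2)).trans_eq
      (card_range _)
  have hg : ∏ p ∈ n.primeFactors, g p = (m : ℝ) ^ δ₃ * (k : ℝ) ^ δ₂ := by
    have hmn : m ∣ n := dvd_mul_of_dvd_left (dvd_pow_self m two_ne_zero) k
    rw [prod_mul_distrib, Nat.prod_rpow_pow_factorization hm (Nat.primeFactors_mono hmn hn),
      Nat.prod_rpow_pow_factorization hk (Nat.primeFactors_mono (dvd_mul_left k _) hn)]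
  calc ((n.divisors.card : ℕ) : ℝ)
        = ∏ p ∈ n.primeFactors, ((n.factorization p : ℕ) + 1 : ℝ) := by
        rw [Nat.card_divisors hn]; push_cast; rfl
    _ ≤ ∏ p ∈ n.primeFactors, (if (p : ℝ) < T then A else 1) * g p :=
        prod_le_prod (fun _ _ => by positivity) hfactor
    _ = A ^ #S * ∏ p ∈ n.primeFactors, g p := by
        rw [prod_mul_distrib, ← prod_filter, prod_const]
    _ ≤ A ^ ⌈T⌉₊ * ((m : ℝ) ^ δ₃ * (k : ℝ) ^ δ₂) := by
        rw [hg]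
        gcongr

lemma Nat.factorization_mul_log_two_le_log {n : ℕ} (hn : n ≠ 0) (p : ℕ) :
    (n.factorization p : ℝ) * Real.log 2 ≤ Real.log n := by
  by_cases hp : p.Prime
  · have h : 2 ^ n.factorization p ≤ n :=
      (Nat.pow_le_pow_left hp.two_le _).trans (Nat.ordProj_le p hn)
    rw [← Real.log_pow]
    exact Real.log_le_log (by positivity) (by exact_mod_cast h)
  · simp [Nat.factorization_eq_zero_of_not_prime n hp, Real.log_natCast_nonneg]

lemma le_rpow_div_log_of_rpow_le {a b x p ε : ℝ} (ha : 1 ≤ a) (hab : a ≤ b) (hε : 0 < ε)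
    (hx : 1 < x) (hp : x ^ (log b / (log b + ε)) ≤ p) :
    a ≤ p ^ ((log a + ε) / log x) := by
  have hla : 0 ≤ log a := log_nonneg ha
  have hlab : log a ≤ log b := log_le_log (by linarith) hab
  have hlx : 0 < log x := log_pos hx
  have hp0 : 0 < p := (rpow_pos_of_pos (by linarith) _).trans_le hp
  have hlp : log b / (log b + ε) * log x ≤ log p := by
    rw [← log_rpow (by linarith)]
    exact log_le_log (rpow_pos_of_pos (by linarith) _) hp
  rw [le_rpow_iff_log_le (by linarith) hp0]
  calc log a ≤ (log a + ε) * (log b / (log b + ε)) := by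
        rw [mul_div_assoc', le_div_iff₀ (by linarith)]
        nlinarith
    _ = (log a + ε) / log x * (log b / (log b + ε) * log x) := by
        field_simp
    _ ≤ (log a + ε) / log x * log p := by gcongr

lemma eventually_rpow_mul_log_sq_le {ρ : ℝ} (hρ : ρ < 1) {ε : ℝ} (hε : 0 < ε) :
    ∀ᶠ x in atTop, x ^ ρ * log x ^ 2 ≤ ε * x := by
  have hlog : (fun x => log x ^ 2) =o[atTop] fun x => x ^ (1 - ρ) := by
    simpa using isLittleO_log_rpow_rpow_atTop 2 (sub_pos.2 hρ)
  have h : (fun x => x ^ ρ * log x ^ 2) =o[atTop] fun x => x := by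
    refine ((isBigO_refl (fun x : ℝ => x ^ ρ) atTop).mul_isLittleO hlog).congr'
      EventuallyEq.rfl ?_
    filter_upwards [eventually_gt_atTop 0] with x hx
    rw [← rpow_add hx, add_sub_cancel, rpow_one]
  filter_upwards [h.bound hε, eventually_gt_atTop 0] with x hx hx0
  rwa [Real.norm_of_nonneg (by positivity), Real.norm_of_nonneg hx0.le] at hx

theorem eventually_log_mul_log_card_divisors_sq_mul_le {ε : ℝ} (hε : 0 < ε) :
    ∀ᶠ x in atTop, ∀ m k : ℕ, m ≠ 0 → k ≠ 0 → log (m ^ 2 * k : ℕ) ≤ 2 * x →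
      log x * log (m ^ 2 * k).divisors.card
        ≤ ε * x + (log 3 + ε) * log m + (log 2 + ε) * log k := by
  set ρ := log 3 / (log 3 + ε)
  have hl2 := log_two_gt_d9
  have hl3 : log 2 ≤ log 3 := log_le_log (by norm_num) (by norm_num)
  have hρ : ρ < 1 := (div_lt_one (by linarith)).2 (by linarith)
  filter_upwards [eventually_rpow_mul_log_sq_le hρ (show 0 < ε / 4 by positivity),
    eventually_ge_atTop 4] with x hsmall hx4 m k hm hk hn
  have hL : 0 < log x := log_pos (by linarith)
  have hthreshold {a : ℝ} (ha : 1 ≤ a) (ha3 : a ≤ 3) (p : ℕ) (_ : p.Prime) (hp : x ^ ρ ≤ p) :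
      a ≤ (p : ℝ) ^ ((log a + ε) / log x) :=
    le_rpow_div_log_of_rpow_le ha ha3 hε (by linarith) hp
  have hfac (p : ℕ) : ((m ^ 2 * k).factorization p + 1 : ℝ) ≤ 4 * x := by
    have := Nat.factorization_mul_log_two_le_log (by positivity : m ^ 2 * k ≠ 0) p
    nlinarith [(Nat.cast_nonneg _ : (0 : ℝ) ≤ (m ^ 2 * k).factorization p)]
  have hτ := Nat.card_divisors_sq_mul_le hm hk (by linarith) hfac
    (by positivity) (by positivity) (hthreshold (by norm_num) (by norm_num))
    (hthreshold (by norm_num) le_rfl)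
  have hm0 : (0 : ℝ) < m := by positivity
  have hk0 : (0 : ℝ) < k := by positivity
  have hτ0 : (0 : ℝ) < (m ^ 2 * k).divisors.card :=
    Nat.cast_pos.2 (card_pos.2 (Nat.nonempty_divisors.2 (by positivity)))
  have hlogτ := log_le_log hτ0 hτ
  rw [log_mul (by positivity) (by positivity), log_mul (by positivity) (by positivity),
    log_pow, log_rpow hm0, log_rpow hk0] at hlogτ
  have hceil : (⌈x ^ ρ⌉₊ : ℝ) ≤ 2 * x ^ ρ := by
    have : 1 ≤ x ^ ρ := one_le_rpow (by linarith) (by positivity)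
    linarith [Nat.ceil_lt_add_one (by positivity : 0 ≤ x ^ ρ)]
  have hlog4 : log (4 * x) ≤ 2 * log x := by
    rw [log_mul (by norm_num) (by linarith)]
    linarith [log_le_log (by norm_num) hx4]
  calc log x * log (m ^ 2 * k).divisors.card
      ≤ log x * (⌈x ^ ρ⌉₊ * log (4 * x) + ((log 3 + ε) / log x * log m
          + (log 2 + ε) / log x * log k)) := by gcongr
    _ = ⌈x ^ ρ⌉₊ * log (4 * x) * log x + (log 3 + ε) * log m + (log 2 + ε) * log k := by
        field_simp
        ring
    _ ≤ 4 * (x ^ ρ * log x ^ 2) + (log 3 + ε) * log m + (log 2 + ε) * log k := by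
        have := log_nonneg (by linarith : (1 : ℝ) ≤ 4 * x)
        nlinarith [mul_le_mul hceil hlog4 this (by positivity)]
    _ ≤ ε * x + (log 3 + ε) * log m + (log 2 + ε) * log k := by linarith

/-- For every η > 0 there exists Q₀ such that for all real Q ≥ Q₀, all real c, and
every positive integer n ≤ Q²: if τ(n) ≥ exp((2·log 2 − c)·(log Q)/(log log Q)), then
every positive integer m with m² ∣ n satisfies m ≤ Q^(c/(2·log 2 − log 3) + η). -/
theorem stmt_12 :
    ∀ η : ℝ, 0 < η → ∃ Q₀ : ℝ, ∀ Q : ℝ, Q₀ ≤ Q → ∀ c : ℝ,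
      ∀ n : ℕ, 0 < n → (n : ℝ) ≤ Q ^ 2 →
        (n.divisors.card : ℝ) ≥
          Real.exp ((2 * Real.log 2 - c) * (Real.log Q / Real.log (Real.log Q))) →
        ∀ m : ℕ, 0 < m → m ^ 2 ∣ n →
          (m : ℝ) ≤ Q ^ (c / (2 * Real.log 2 - Real.log 3) + η) := by
  intro η hη
  set D := 2 * log 2 - log 3
  have hD : 0 < D := by
    have := log_lt_log (by norm_num) (by norm_num : (3 : ℝ) < 2 ^ 2)
    rw [log_pow] at this
    push_cast at this
    linarith
  have hε : 0 < D * η / 3 := by positivity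
  obtain ⟨Q₀, hQ₀⟩ := eventually_atTop.1 <| (eventually_gt_atTop 0).and <|
    tendsto_log_atTop.eventually <| (tendsto_log_atTop.eventually_gt_atTop 0).and <|
      eventually_log_mul_log_card_divisors_sq_mul_le hε
  refine ⟨Q₀, fun Q hQ c n hn hnQ hτ m hm ⟨k, hk⟩ => ?_⟩
  obtain ⟨hQ0, hL, hbound⟩ := hQ₀ Q hQ
  subst hk
  have hk : k ≠ 0 := by rintro rfl; simp at hn
  have hlogn : log (m ^ 2 * k : ℕ) = 2 * log m + log k := by
    push_cast
    rw [log_mul (by positivity) (by positivity), log_pow]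
    push_cast
    ring
  have hnQ' : log (m ^ 2 * k : ℕ) ≤ 2 * log Q := by
    simpa [log_pow] using log_le_log (by positivity) hnQ
  have hτ' : (2 * log 2 - c) * log Q ≤ log (log Q) * log (m ^ 2 * k).divisors.card :=
    calc (2 * log 2 - c) * log Q
          = log (log Q) * ((2 * log 2 - c) * (log Q / log (log Q))) := by field_simp
      _ ≤ _ := by gcongr; exact (le_log_iff_exp_le ((exp_pos _).trans_le hτ)).2 hτ
  have hmain := hτ'.trans (hbound m k hm.ne' hk hnQ')
  have hm0 : 0 ≤ log m := log_natCast_nonneg m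
  rw [le_rpow_iff_log_le (by positivity) hQ0, div_add' _ _ _ hD.ne', div_mul_eq_mul_div,
    le_div_iff₀' hD]
  linarith [mul_le_mul_of_nonneg_left (show log k ≤ 2 * log Q - 2 * log m by linarith)
    (show 0 ≤ log 2 + D * η / 3 by positivity), mul_nonneg hε.le hm0]
end

section
/- For every positive integer n and every real number T ≥ 1, there exist an integer s ≥ 0, squarefree positive integers n₁, …, n_s each satisfying nᵢ > T, and a positive integer m with rad(m) ≤ T, such that n = n₁ · n₂ · ⋯ · n_s · m. -/
open Finset

lemma sqfree_prod_primes (s : Finset ℕ) (h : ∀ p ∈ s, p.Prime) :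
    Squarefree (∏ p ∈ s, p) := by
  induction s using Finset.induction with
  | empty => simpa using squarefree_one
  | @insert a t ha ih =>
    rw [Finset.prod_insert ha]
    have hap := h a (Finset.mem_insert_self a t)
    have ht : ∀ p ∈ t, p.Prime := fun p hp => h p (Finset.mem_insert_of_mem hp)
    have hcop : Nat.Coprime a (∏ p ∈ t, p) := by
      refine (Nat.Prime.coprime_iff_not_dvd hap).mpr ?_
      intro hd
      obtain ⟨q, hq, hdq⟩ := (Prime.dvd_finset_prod_iff hap.prime _).mp hd
      exact ha (((Nat.prime_dvd_prime_iff_eq hap (ht q hq)).mp hdq) ▸ hq)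
    exact (Nat.squarefree_mul hcop).mpr ⟨hap.prime.squarefree, ih ht⟩
  
/-- For every positive integer n and every real T ≥ 1, there exist s ≥ 0, squarefree
positive integers n₁, …, n_s each > T, and a positive integer m with rad(m) ≤ T
(rad(m) = product of the distinct prime divisors of m), with n = n₁·n₂⋯n_s·m. -/
theorem stmt_15 (n : ℕ) (hn : 0 < n) (T : ℝ) (hT : 1 ≤ T) :
    ∃ (s : ℕ) (f : Fin s → ℕ) (m : ℕ),
      (∀ i, 0 < f i) ∧ (∀ i, Squarefree (f i)) ∧ (∀ i, T < (f i : ℝ)) ∧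
      0 < m ∧ ((∏ p ∈ m.primeFactors, p : ℕ) : ℝ) ≤ T ∧
      n = (∏ i, f i) * m := by
  induction n using Nat.strong_induction_on with
  | _ n ih =>
    by_cases h : ((∏ p ∈ n.primeFactors, p : ℕ) : ℝ) ≤ T
    · exact ⟨0, Fin.elim0, n, fun i => i.elim0, fun i => i.elim0, fun i => i.elim0, hn, h,
        by simp⟩
    · push_neg at h
      set r := ∏ p ∈ n.primeFactors, p with hr
      have hrdvd : r ∣ n := Nat.prod_primeFactors_dvd n
      have hr1 : 1 < r := by exact_mod_cast lt_of_le_of_lt hT h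
      obtain ⟨k, hk⟩ := hrdvd
      have hkpos : 0 < k := by
        rcases Nat.eq_zero_or_pos k with h0 | h0
        · simp [h0] at hk; omega
        · exact h0
      have hklt : k < n := by
        calc k < r * k := by nlinarith
        _ = n := hk.symm
      obtain ⟨s, f, m, h1, h2, h3, h4, h5, h6⟩ := ih k hklt hkpos
      refine ⟨s + 1, Fin.cons r f, m, ?_, ?_, ?_, h4, h5, ?_⟩
      · intro i
        refine Fin.cases ?_ ?_ i
        · simpa using hr1.trans_le' (by norm_num)
        · intro j; simpa using h1 j
      · intro i
        refine Fin.cases ?_ ?_ i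
        · simpa using sqfree_prod_primes _ (fun p hp => Nat.prime_of_mem_primeFactors hp)
        · intro j; simpa using h2 j
      · intro i
        refine Fin.cases ?_ ?_ i
        · simpa using h
        · intro j; simpa using h3 j
      · rw [Fin.prod_cons, hk, h6]; ring
end
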